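/- arXiv:0705.2526 — 10 statements merged into one kernel-verified Lean document; each statement's English description precedes it below -/
import Mathlib

section
/- Let X be a real Banach space, let x be a point of the unit sphere of X, and let g be a norm-one functional with g(x)=1. If (x_n) is a sequence in the closed unit ball with x in the closed convex hull of {x_n}, then there exists a subsequence (y_j) of (x_n) (as a sequence of values chosen from the x_n) such that g(y_j) → 1 as j → ∞ and x lies in the closed convex hull of {y_j : j ≥ l} for every l ∈ ℕ. -/
/-!
Write a convex combination `z` of points of the unit ball as `(1 - μ) a + μ c`, where `a` is a
convex combination of the points with `g > 1 - ε` and `c` one of the points with `g ≤ 1 - ε`.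
Then `μ ε ≤ 1 - g z ≤ ‖x - z‖` and `‖z - a‖ ≤ 2μ`, so `x` stays in the closed convex hull of every
slice `{x_n : g x_n > 1 - ε}`. Choose finite sets `F_k` in the slices for `ε = 1/(k+1)` whose
convex hulls come within `1/(k+1)` of `x`, and enumerate all of them in one sequence: along it
`g → 1`, and each tail contains all but finitely many of the `F_k`.
-/

open Filter Topology Set Metric

section

variable {X : Type*} [NormedAddCommGroup X] [NormedSpace ℝ X] {g : X →L[ℝ] ℝ}

theorem ContinuousLinearMap.apply_le_of_opNorm_le_one (hg : ‖g‖ ≤ 1) (v : X) : g v ≤ ‖v‖ :=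
  (le_abs_self _).trans ((g.le_of_opNorm_le hg v).trans_eq (one_mul _))

theorem mul_dist_le_of_mem_segment {a c z : X} {ε : ℝ} (hg : ‖g‖ ≤ 1) (ha : ‖a‖ ≤ 1)
    (hc : ‖c‖ ≤ 1) (hgc : g c ≤ 1 - ε) (hε : 0 ≤ ε) (hz : z ∈ segment ℝ a c) :
    ε * dist z a ≤ 2 * (1 - g z) := by
  rw [segment_eq_image'] at hz
  obtain ⟨θ, ⟨hθ0, hθ1⟩, rfl⟩ := hz
  have hdist : dist (a + θ • (c - a)) a ≤ 2 * θ := by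
    rw [dist_eq_norm, add_sub_cancel_left, norm_smul, Real.norm_of_nonneg hθ0, mul_comm]
    gcongr
    linarith [norm_sub_le c a]
  have hga := g.apply_le_of_opNorm_le_one hg a
  have hgz : g (a + θ • (c - a)) = (1 - θ) * g a + θ * g c := by
    simp only [map_add, map_smul, map_sub, smul_eq_mul]; ring
  rw [hgz]
  nlinarith [mul_le_mul_of_nonneg_left hdist hε]

theorem exists_mem_convexHull_mul_dist_le {s t : Set X} {z : X} {ε : ℝ} (hg : ‖g‖ ≤ 1)
    (hs : s ⊆ closedBall 0 1) (ht : t ⊆ closedBall 0 1) (hgt : ∀ v ∈ t, g v ≤ 1 - ε)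
    (hz : z ∈ convexHull ℝ (s ∪ t)) (hgz : 1 - ε < g z) :
    ∃ a ∈ convexHull ℝ s, ε * dist z a ≤ 2 * (1 - g z) := by
  have hnorm : ∀ {u : Set X} {v}, u ⊆ closedBall 0 1 → v ∈ convexHull ℝ u → ‖v‖ ≤ 1 :=
    fun hu hv => mem_closedBall_zero_iff.1 (convexHull_min hu (convex_closedBall 0 1) hv)
  have hgz1 : g z ≤ 1 :=
    (g.apply_le_of_opNorm_le_one hg z).trans (hnorm (union_subset hs ht) hz)
  have hhalf : convexHull ℝ t ⊆ {v | g v ≤ 1 - ε} :=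
    convexHull_min hgt (convex_halfSpace_le g.isLinear _)
  rcases t.eq_empty_or_nonempty with rfl | htne
  · exact ⟨z, by simpa using hz, by simpa using hgz1⟩
  rcases s.eq_empty_or_nonempty with rfl | hsne
  · exact absurd (hhalf (by simpa using hz)) (not_le.2 hgz)
  rw [convexHull_union hsne htne, mem_convexJoin] at hz
  obtain ⟨a, has, c, hct, hzac⟩ := hz
  exact ⟨a, has, mul_dist_le_of_mem_segment hg (hnorm hs has) (hnorm ht hct) (hhalf hct)
    (by linarith) hzac⟩

theorem mem_closure_convexHull_sep_lt {s : Set X} {x : X} {ε : ℝ} (hg : ‖g‖ ≤ 1)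
    (hgx : g x = 1) (hs : s ⊆ closedBall 0 1) (hx : x ∈ closure (convexHull ℝ s))
    (hε : 0 < ε) : x ∈ closure (convexHull ℝ {v ∈ s | 1 - ε < g v}) := by
  rw [Metric.mem_closure_iff] at hx ⊢
  intro δ hδ
  set η := min ε (δ * ε / (ε + 2))
  obtain ⟨z, hz, hxz⟩ := hx η (by positivity)
  have hgz : 1 - g z ≤ dist x z := by
    rw [← hgx, ← map_sub, dist_eq_norm]
    exact g.apply_le_of_opNorm_le_one hg _
  have hsplit : s ⊆ {v ∈ s | 1 - ε < g v} ∪ {v ∈ s | g v ≤ 1 - ε} := fun v hv =>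
    (lt_or_ge (1 - ε) (g v)).imp (fun h => ⟨hv, h⟩) fun h => ⟨hv, h⟩
  obtain ⟨a, ha, hza⟩ := exists_mem_convexHull_mul_dist_le hg (sep_subset _ _ |>.trans hs)
    (sep_subset _ _ |>.trans hs) (fun v hv => hv.2) (convexHull_mono hsplit hz)
    (by linarith [min_le_left ε (δ * ε / (ε + 2))])
  refine ⟨a, ha, lt_of_mul_lt_mul_left ?_ hε.le⟩
  have hη : η * (ε + 2) ≤ δ * ε := by
    rw [← le_div_iff₀ (by positivity)]; exact min_le_right _ _
  calc ε * dist x a ≤ ε * dist x z + ε * dist z a := by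
        rw [← mul_add]; gcongr; exact dist_triangle x z a
    _ ≤ (ε + 2) * dist x z := by linarith
    _ < (ε + 2) * η := by gcongr
    _ ≤ ε * δ := by linarith

theorem exists_finset_subset_dist_convexHull_lt {s : Set X} {x : X} {δ : ℝ}
    (hx : x ∈ closure (convexHull ℝ s)) (hδ : 0 < δ) :
    ∃ t : Finset X, ↑t ⊆ s ∧ ∃ z ∈ convexHull ℝ (t : Set X), dist x z < δ := by
  obtain ⟨z, hz, hxz⟩ := Metric.mem_closure_iff.1 hx δ hδ
  rw [convexHull_eq_union_convexHull_finite_subsets] at hz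
  simp only [mem_iUnion] at hz
  obtain ⟨t, hts, hzt⟩ := hz
  exact ⟨t, hts, z, hzt, hxz⟩

end

theorem exists_seq_enumerating_finite_levels {α : Type*} (F : ℕ → Set α)
    (hfin : ∀ k, (F k).Finite) (hne : ∀ k, (F k).Nonempty) :
    ∃ (y : ℕ → α) (level : ℕ → ℕ), (∀ j, y j ∈ F (level j)) ∧
      Tendsto level atTop atTop ∧ ∀ l, ∀ᶠ k in atTop, F k ⊆ y '' Ici l := by
  have : ∀ k, Finite (F k) := fun k => (hfin k).to_subtype
  have : ∀ k, Nonempty (F k) := fun k => (hne k).to_subtype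
  obtain ⟨e⟩ : Nonempty (ℕ ≃ Σ k, F k) := ⟨(nonempty_denumerable _).some.eqv.symm⟩
  have hfst : Tendsto (Sigma.fst : (Σ k, F k) → ℕ) cofinite cofinite :=
    Tendsto.cofinite_of_finite_preimage_singleton fun k =>
      (finite_range (Sigma.mk (β := fun k => F k) k)).subset <| by
        rintro ⟨k', v⟩ rfl
        exact ⟨v, rfl⟩
  refine ⟨fun j => (e j).2, fun j => (e j).1, fun j => (e j).2.2, ?_, fun l => ?_⟩
  · rw [← Nat.cofinite_eq_atTop]
    exact hfst.comp e.injective.tendsto_cofinite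
  · have hearly : (Sigma.fst '' (e '' Iio l)).Finite := ((finite_Iio l).image e).image _
    rw [← Nat.cofinite_eq_atTop]
    filter_upwards [hearly.eventually_cofinite_notMem] with k hk v hv
    refine ⟨e.symm ⟨k, v, hv⟩, mem_Ici.2 (not_lt.1 fun h => hk ?_),
      congrArg (fun i : Σ k, F k => (i.2 : α)) (e.apply_symm_apply _)⟩
    exact ⟨⟨k, v, hv⟩, ⟨_, h, e.apply_symm_apply _⟩, rfl⟩

theorem stmt1_general {X : Type*} [NormedAddCommGroup X] [NormedSpace ℝ X]
    (x : X) (g : X →L[ℝ] ℝ) (hg : ‖g‖ = 1) (hgx : g x = 1)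
    (xs : ℕ → X) (hxs : ∀ n, ‖xs n‖ ≤ 1)
    (hmem : x ∈ closure (convexHull ℝ (Set.range xs))) :
    ∃ y : ℕ → X, (∀ j, ∃ n, y j = xs n) ∧
      Tendsto (fun j => g (y j)) atTop (𝓝 1) ∧
      ∀ l : ℕ, x ∈ closure (convexHull ℝ {v | ∃ j, l ≤ j ∧ v = y j}) := by
  have hball : range xs ⊆ closedBall 0 1 := by
    rintro _ ⟨n, rfl⟩
    exact mem_closedBall_zero_iff.2 (hxs n)
  have hslices (k : ℕ) : ∃ t : Finset X, ↑t ⊆ {v ∈ range xs | 1 - 1 / ((k : ℝ) + 1) < g v} ∧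
      ∃ z ∈ convexHull ℝ (t : Set X), dist x z < 1 / ((k : ℝ) + 1) :=
    exists_finset_subset_dist_convexHull_lt
      (mem_closure_convexHull_sep_lt hg.le hgx hball hmem (by positivity)) (by positivity)
  choose F hFslice hFx using hslices
  obtain ⟨y, level, hy, hlevel, htail⟩ := exists_seq_enumerating_finite_levels
    (fun k => (F k : Set X)) (fun k => (F k).finite_toSet)
    (fun k => convexHull_nonempty_iff.1 ((hFx k).imp fun _ h => h.1))
  refine ⟨y, fun j => ?_, ?_, fun l => ?_⟩
  · obtain ⟨⟨n, hn⟩, -⟩ := hFslice _ (hy j)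
    exact ⟨n, hn.symm⟩
  · have hlower : Tendsto (fun j => 1 - 1 / ((level j : ℝ) + 1)) atTop (𝓝 1) := by
      simpa using (tendsto_one_div_add_atTop_nhds_zero_nat.comp hlevel).const_sub (1 : ℝ)
    refine tendsto_of_tendsto_of_tendsto_of_le_of_le hlower tendsto_const_nhds
      (fun j => (hFslice _ (hy j)).2.le) fun j => ?_
    exact (g.apply_le_of_opNorm_le_one hg.le _).trans
      (mem_closedBall_zero_iff.1 (hball (hFslice _ (hy j)).1))
  · rw [Metric.mem_closure_iff]
    intro δ hδ
    obtain ⟨k, hkδ, hk⟩ := ((tendsto_one_div_add_atTop_nhds_zero_nat.eventually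
      (gt_mem_nhds hδ)).and (htail l)).exists
    obtain ⟨z, hz, hxz⟩ := hFx k
    refine ⟨z, convexHull_mono (hk.trans ?_) hz, hxz.trans hkδ⟩
    rintro _ ⟨j, hj, rfl⟩
    exact ⟨j, hj, rfl⟩

/-- Lemma 2.1(iii): there is a subsequence of values `(y_j)` chosen from the `x_n` with
`g (y_j) → 1` and `x` in the closed convex hull of every tail `{y_j : j ≥ l}`. -/
theorem stmt1 {X : Type*} [NormedAddCommGroup X] [NormedSpace ℝ X] [CompleteSpace X]
    (x : X) (hx : ‖x‖ = 1) (g : X →L[ℝ] ℝ) (hg : ‖g‖ = 1) (hgx : g x = 1)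
    (xs : ℕ → X) (hxs : ∀ n, ‖xs n‖ ≤ 1)
    (hmem : x ∈ closure (convexHull ℝ (Set.range xs))) :
    ∃ y : ℕ → X, (∀ j, ∃ n, y j = xs n) ∧
      Tendsto (fun j => g (y j)) atTop (𝓝 1) ∧
      ∀ l : ℕ, x ∈ closure (convexHull ℝ {v | ∃ j, l ≤ j ∧ v = y j}) :=
  stmt1_general x g hg hgx xs hxs hmem
end

section
/- Let X be a real Banach space, x a smooth point of the unit sphere (i.e. there is a unique norm-one functional f with f(x)=1). Then the sets {g ∈ B_{X*} : g(x) > 1 - 1/n}, n ∈ ℕ, form a neighbourhood basis of f in the closed dual unit ball B_{X*} equipped with the weak-star topology: for every weak-star open set U ⊆ B_{X*} containing f, there is n ∈ ℕ with {g ∈ B_{X*} : g(x) > 1 - 1/n} ⊆ U. -/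
/-!
By Banach–Alaoglu the closed slices `{g ∈ B_{X*} : g x ≥ 1 - 1/(n+1)}` are weak-star compact, and
they decrease to `{g ∈ B_{X*} : g x ≥ 1}`, which is `{f}` since `x` is smooth. A decreasing
sequence of compact sets in a Hausdorff space is eventually inside any neighbourhood of its
intersection.
-/

open Metric Filter Topology

namespace WeakDual

variable {X : Type*} [NormedAddCommGroup X] [NormedSpace ℝ X]

def ballSlice (x : X) (c : ℝ) : Set (WeakDual ℝ X) :=
  toStrongDual ⁻¹' closedBall 0 1 ∩ {φ | c ≤ φ x}

theorem isCompact_ballSlice (x : X) (c : ℝ) : IsCompact (ballSlice x c) :=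
  (isCompact_closedBall 0 1).inter_right (isClosed_le continuous_const (eval_continuous x))

theorem ballSlice_antitone (x : X) : Antitone (ballSlice x) :=
  fun _ _ hcd _ ⟨hball, hφ⟩ ↦ ⟨hball, hcd.trans hφ⟩

end WeakDual

open WeakDual

theorem one_le_of_forall_one_sub_inv_succ_le {a : ℝ} (h : ∀ n : ℕ, 1 - 1 / ((n : ℝ) + 1) ≤ a) :
    1 ≤ a := by
  have hlim : Tendsto (fun n : ℕ ↦ 1 - 1 / ((n : ℝ) + 1)) atTop (𝓝 1) := by
    simpa using (tendsto_const_nhds (x := (1 : ℝ))).sub tendsto_one_div_add_atTop_nhds_zero_nat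
  exact le_of_tendsto' hlim h

theorem StrongDual.norm_eq_one_and_apply_eq_one {X : Type*} [NormedAddCommGroup X]
    [NormedSpace ℝ X] {x : X} (hx : ‖x‖ = 1) {g : StrongDual ℝ X} (hg : ‖g‖ ≤ 1)
    (hgx : 1 ≤ g x) : ‖g‖ = 1 ∧ g x = 1 := by
  have hle : g x ≤ ‖g‖ := by
    simpa [hx] using (le_abs_self (g x)).trans (g.le_opNorm x)
  exact ⟨le_antisymm hg (hgx.trans hle), le_antisymm (hle.trans hg) hgx⟩

theorem stmt4_general {X : Type*} [NormedAddCommGroup X] [NormedSpace ℝ X]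
    (x : X) (hx : ‖x‖ = 1)
    (f : StrongDual ℝ X)
    (hsmooth : ∃! h : StrongDual ℝ X, ‖h‖ = 1 ∧ h x = 1)
    (hf : ‖f‖ = 1) (hfx : f x = 1) :
    ∀ V : Set (WeakDual ℝ X), IsOpen V → StrongDual.toWeakDual f ∈ V →
      ∃ n : ℕ, 0 < n ∧
        ∀ g : StrongDual ℝ X, ‖g‖ ≤ 1 → g x > 1 - 1 / (n : ℝ) →
          StrongDual.toWeakDual g ∈ V := by
  intro V hV hfV
  have hinter : ∀ φ ∈ ⋂ n : ℕ, ballSlice x (1 - 1 / ((n : ℝ) + 1)), V ∈ 𝓝 φ := by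
    intro φ hφ
    rw [Set.mem_iInter] at hφ
    have hφf : toStrongDual φ = f := hsmooth.unique
      (StrongDual.norm_eq_one_and_apply_eq_one hx (by simpa using (hφ 0).1)
        (one_le_of_forall_one_sub_inv_succ_le fun n ↦ (hφ n).2)) ⟨hf, hfx⟩
    exact hV.mem_nhds (by rwa [← hφf] at hfV)
  have hdir : Directed (· ⊇ ·) fun n : ℕ ↦ ballSlice x (1 - 1 / ((n : ℝ) + 1)) :=
    ((ballSlice_antitone x).comp_monotone fun m n hmn ↦ by gcongr).directed_ge
  obtain ⟨n, hn⟩ := exists_subset_nhds_of_isCompact hdir (fun _ ↦ isCompact_ballSlice _ _) hinter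
  exact ⟨n + 1, n.succ_pos, fun g hg hgx ↦ hn ⟨by simpa using hg, by exact_mod_cast hgx.le⟩⟩

/-- At a smooth point `x` of the unit sphere, the slices `{g ∈ B_{X*} : g x > 1 - 1/n}` form a
weak-star neighbourhood basis of the (unique) support functional `f` relative to the dual ball. -/
theorem stmt4 {X : Type*} [NormedAddCommGroup X] [NormedSpace ℝ X] [CompleteSpace X]
    (x : X) (hx : ‖x‖ = 1)
    (f : StrongDual ℝ X)
    (hsmooth : ∃! h : StrongDual ℝ X, ‖h‖ = 1 ∧ h x = 1)
    (hf : ‖f‖ = 1) (hfx : f x = 1) :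
    ∀ V : Set (WeakDual ℝ X), IsOpen V → StrongDual.toWeakDual f ∈ V →
      ∃ n : ℕ, 0 < n ∧
        ∀ g : StrongDual ℝ X, ‖g‖ ≤ 1 → g x > 1 - 1 / (n : ℝ) →
          StrongDual.toWeakDual g ∈ V :=
  stmt4_general x hx f hsmooth hf hfx
end

section
/- (Šmulyan) Let X be a real Banach space and x ∈ S_X. Then the norm of X is Gâteaux differentiable at x if and only if for all sequences (f_n), (g_n) in S_{X*} with f_n(x) → 1 and g_n(x) → 1, one has f_n - g_n → 0 in the weak-star topology of X*. -/
/-!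
Forward direction: by Banach–Alaoglu the norming sequence `f_n` lies in the weak-star compact
unit ball of `X*`, and every weak-star cluster point `g` of it satisfies `‖g‖ ≤ 1` and `g x = 1`,
so it is the unique support functional `f₀`; hence `f_n → f₀` weak-star, and likewise `g_n → f₀`.
Converse: two support functionals `f`, `g` form constant norming sequences, so `f - g → 0`
weak-star forces `f = g`.
-/

open Filter Topology

section Smulyan

variable {X : Type*} [NormedAddCommGroup X] [NormedSpace ℝ X]

theorem norm_eq_one_of_norm_le_one_of_apply_eq_one {x : X} (hx : ‖x‖ = 1)
    {g : StrongDual ℝ X} (hg : ‖g‖ ≤ 1) (hgx : g x = 1) : ‖g‖ = 1 :=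
  le_antisymm hg (by simpa [hx, hgx] using g.le_opNorm x)

theorem tendsto_toWeakDual_of_forall_support_eq {ι : Type*} {l : Filter ι} {x : X}
    (hx : ‖x‖ = 1) {f₀ : StrongDual ℝ X}
    (huniq : ∀ g : StrongDual ℝ X, ‖g‖ = 1 → g x = 1 → g = f₀)
    {f : ι → StrongDual ℝ X} (hf : ∀ i, ‖f i‖ ≤ 1) (hfx : Tendsto (fun i => f i x) l (𝓝 1)) :
    Tendsto (fun i => StrongDual.toWeakDual (f i)) l (𝓝 (StrongDual.toWeakDual f₀)) := by
  refine (WeakDual.isCompact_closedBall (0 : StrongDual ℝ X) 1).tendsto_nhds_of_unique_mapClusterPt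
    (Eventually.of_forall fun i => by simpa using hf i) fun g hg hclust => ?_
  have hgx : g x = 1 := eq_of_nhds_neBot
    ((hclust.continuousAt_comp (WeakDual.eval_continuous x).continuousAt).clusterPt.mono hfx)
  have hg1 : ‖WeakDual.toStrongDual g‖ ≤ 1 := by simpa using hg
  exact congrArg StrongDual.toWeakDual
    (huniq _ (norm_eq_one_of_norm_le_one_of_apply_eq_one hx hg1 hgx) hgx)

theorem tendsto_apply_of_forall_support_eq {ι : Type*} {l : Filter ι} {x : X}
    (hx : ‖x‖ = 1) {f₀ : StrongDual ℝ X}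
    (huniq : ∀ g : StrongDual ℝ X, ‖g‖ = 1 → g x = 1 → g = f₀)
    {f : ι → StrongDual ℝ X} (hf : ∀ i, ‖f i‖ ≤ 1) (hfx : Tendsto (fun i => f i x) l (𝓝 1))
    (v : X) : Tendsto (fun i => f i v) l (𝓝 (f₀ v)) :=
  ((WeakDual.eval_continuous v).tendsto _).comp
    (tendsto_toWeakDual_of_forall_support_eq hx huniq hf hfx)

end Smulyan

theorem stmt5_general {X : Type*} [NormedAddCommGroup X] [NormedSpace ℝ X]
    (x : X) (hx : ‖x‖ = 1) :
    (∃! f : StrongDual ℝ X, ‖f‖ = 1 ∧ f x = 1) ↔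
      ∀ f g : ℕ → StrongDual ℝ X,
        (∀ n, ‖f n‖ = 1) → (∀ n, ‖g n‖ = 1) →
        Tendsto (fun n => f n x) atTop (𝓝 1) →
        Tendsto (fun n => g n x) atTop (𝓝 1) →
        ∀ v : X, Tendsto (fun n => f n v - g n v) atTop (𝓝 0) := by
  constructor
  · rintro ⟨f₀, -, huniq⟩ f g hfn hgn hfx hgx v
    have huniq' : ∀ h : StrongDual ℝ X, ‖h‖ = 1 → h x = 1 → h = f₀ :=
      fun h hn hx' => huniq h ⟨hn, hx'⟩
    simpa using (tendsto_apply_of_forall_support_eq hx huniq' (fun n => (hfn n).le) hfx v).sub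
      (tendsto_apply_of_forall_support_eq hx huniq' (fun n => (hgn n).le) hgx v)
  · intro H
    obtain ⟨f₀, hf₀n, hf₀x⟩ := exists_dual_vector ℝ x (by simp [hx])
    rw [hx] at hf₀x
    refine ⟨f₀, ⟨hf₀n, hf₀x⟩, fun g ⟨hgn, hgx⟩ => ContinuousLinearMap.ext fun v => ?_⟩
    have hlim := H (fun _ => g) (fun _ => f₀) (fun _ => hgn) (fun _ => hf₀n)
      (by simp [hgx]) (by simp [hf₀x]) v
    exact sub_eq_zero.1 (tendsto_const_nhds_iff.1 hlim)

/-- Šmulyan's lemma: the norm is Gâteaux smooth at `x ∈ S_X` (equivalently, `x` has a unique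
norm-one support functional) iff for all sequences `(f_n), (g_n) ⊆ S_{X*}` with
`f_n x → 1` and `g_n x → 1` one has `f_n - g_n → 0` in the weak-star topology. -/
theorem stmt5 {X : Type*} [NormedAddCommGroup X] [NormedSpace ℝ X] [CompleteSpace X]
    (x : X) (hx : ‖x‖ = 1) :
    (∃! f : StrongDual ℝ X, ‖f‖ = 1 ∧ f x = 1) ↔
      ∀ f g : ℕ → StrongDual ℝ X,
        (∀ n, ‖f n‖ = 1) → (∀ n, ‖g n‖ = 1) →
        Tendsto (fun n => f n x) atTop (𝓝 1) →
        Tendsto (fun n => g n x) atTop (𝓝 1) →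
        ∀ v : X, Tendsto (fun n => f n v - g n v) atTop (𝓝 0) :=
  stmt5_general x hx
end

section
/- In ℓ¹ (real sequences with summable absolute values), for each n the pair (e_n, e_n*) is a Flinn pair, where e_n is the n-th canonical unit vector and e_n* the n-th coordinate functional; that is, ‖I - e_n* ⊗ e_n‖ = 1. -/
noncomputable section

def coordCLM (n : ℕ) : lp (fun _ : ℕ => ℝ) 1 →L[ℝ] ℝ :=
  LinearMap.mkContinuous
    { toFun := fun x => x n
      map_add' := fun x y => by simp
      map_smul' := fun c x => by simp }
    1
    (fun x => by
      show ‖x n‖ ≤ 1 * ‖x‖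
      simpa using lp.norm_apply_le_norm (by norm_num : (1 : ENNReal) ≠ 0) x n)

local notation "ℓ¹" => lp (fun _ : ℕ => ℝ) 1

theorem ContinuousLinearMap.one_le_opNorm_of_apply_eq_self {𝕜 E : Type*}
    [NontriviallyNormedField 𝕜] [NormedAddCommGroup E] [NormedSpace 𝕜 E]
    (T : E →L[𝕜] E) {x : E} (hx : x ≠ 0) (hTx : T x = x) : 1 ≤ ‖T‖ :=
  le_of_mul_le_mul_right (by simpa [hTx] using T.le_opNorm x) (norm_pos_iff.mpr hx)

theorem coordCLM_apply (n : ℕ) (x : ℓ¹) : coordCLM n x = x n := rfl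

theorem id_sub_coordCLM_smulRight_single_apply (n k : ℕ) (x : ℓ¹) :
    (ContinuousLinearMap.id ℝ ℓ¹ - (coordCLM n).smulRight (lp.single 1 n (1 : ℝ)) : ℓ¹ →L[ℝ] ℓ¹)
      x k = if k = n then 0 else x k := by
  simp only [sub_apply, ContinuousLinearMap.id_apply, ContinuousLinearMap.smulRight_apply,
    coordCLM_apply, lp.coeFn_sub, lp.coeFn_smul, Pi.sub_apply, Pi.smul_apply, lp.single_apply]
  split_ifs with hk
  · subst hk; simp
  · simp [hk]

/-- In `ℓ¹`, each pair `(e_n, e_n*)` is a Flinn pair: `‖I - e_n* ⊗ e_n‖ = 1`. -/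
theorem stmt9 (n : ℕ) :
    ‖ContinuousLinearMap.id ℝ (lp (fun _ : ℕ => ℝ) 1) -
      (coordCLM n).smulRight (lp.single 1 n (1 : ℝ))‖ = 1 := by
  set T := ContinuousLinearMap.id ℝ (lp (fun _ : ℕ => ℝ) 1) -
    (coordCLM n).smulRight (lp.single 1 n (1 : ℝ))
  have hT : ∀ x k, T x k = if k = n then 0 else x k :=
    fun x k => id_sub_coordCLM_smulRight_single_apply n k x
  apply le_antisymm
  · refine T.opNorm_le_bound zero_le_one fun x => ?_
    rw [one_mul]
    exact lp.norm_mono one_ne_zero fun k => by rw [hT]; split_ifs <;> simp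
  · -- `T` fixes every basis vector other than `e_n`.
    set e := lp.single (E := fun _ : ℕ => ℝ) 1 (n + 1) (1 : ℝ)
    have he : e ≠ 0 := fun h => by simpa [e] using congrArg (· (n + 1)) h
    refine T.one_le_opNorm_of_apply_eq_self he (lp.ext (funext fun k => ?_))
    rw [hT]
    split_ifs with hk
    · simp [e, hk]
    · rfl

end
end

section
/- Let X be a real Banach space that is ω-LUR (every point of the unit sphere is a weak-LUR point) and suppose u ∈ S_X is a big point. Then for every x ∈ S_X there is a sequence (u_n) of images of u under surjective linear isometries of X such that u_n → x weakly. -/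
open Filter Topology

/-!
Since `x` lies in the closed convex hull of the orbit of `u`, and `z ↦ ‖x + z‖` is convex and
continuous, the orbit contains points `z` with `‖x + z‖` arbitrarily close to `‖x + x‖ = 2`.
The ω-LUR property at `x` turns such a sequence into one converging weakly to `x`.
-/

section NormedSpace

variable {E : Type*} [NormedAddCommGroup E] [NormedSpace ℝ E]

lemma exists_mem_lt_norm_add_add_of_mem_closure_convexHull {S : Set E} {x : E}
    (hx : x ∈ closure (convexHull ℝ S)) (w : E) {ε : ℝ} (hε : 0 < ε) :
    ∃ z ∈ S, ‖w + x‖ < ‖w + z‖ + ε := by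
  obtain ⟨y, hy, hxy⟩ := Metric.mem_closure_iff.mp hx ε hε
  obtain ⟨z, hzS, hyz⟩ :=
    (convexOn_dist (-w) convex_univ).exists_ge_of_mem_convexHull (Set.subset_univ _) hy
  have hyz' : ‖w + y‖ ≤ ‖w + z‖ := by
    simpa only [dist_eq_norm, sub_neg_eq_add, add_comm] using hyz
  refine ⟨z, hzS, ?_⟩
  calc ‖w + x‖ = ‖(w + y) + (x - y)‖ := by rw [add_add_sub_cancel]
    _ ≤ ‖w + y‖ + ‖x - y‖ := norm_add_le _ _
    _ < ‖w + z‖ + ε := by rw [← dist_eq_norm]; linarith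

lemma exists_seq_mem_tendsto_norm_add_of_mem_closure_convexHull {S : Set E} {x : E}
    (hx : x ∈ closure (convexHull ℝ S)) (hS : S ⊆ Metric.closedBall 0 ‖x‖) :
    ∃ zs : ℕ → E, (∀ n, zs n ∈ S) ∧ Tendsto (fun n => ‖x + zs n‖) atTop (𝓝 (2 * ‖x‖)) := by
  choose zs hzS hzs using fun n : ℕ =>
    exists_mem_lt_norm_add_add_of_mem_closure_convexHull hx x (Nat.one_div_pos_of_nat (n := n))
  refine ⟨zs, hzS, ?_⟩
  have hxx : ‖x + x‖ = 2 * ‖x‖ := by rw [← two_smul ℝ x, norm_smul, Real.norm_two]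
  have hlower : Tendsto (fun n : ℕ => 2 * ‖x‖ - 1 / ((n : ℝ) + 1)) atTop (𝓝 (2 * ‖x‖)) := by
    simpa using tendsto_const_nhds.sub (tendsto_one_div_add_atTop_nhds_zero_nat (𝕜 := ℝ))
  refine tendsto_of_tendsto_of_tendsto_of_le_of_le hlower tendsto_const_nhds
    (fun n => by linarith [hzs n]) (fun n => ?_)
  have hz : ‖zs n‖ ≤ ‖x‖ := by simpa using hS (hzS n)
  linarith [norm_add_le x (zs n)]

end NormedSpace

theorem stmt12_general {X : Type*} [NormedAddCommGroup X] [NormedSpace ℝ X]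
    (hwLUR : ∀ x : X, ‖x‖ = 1 → ∀ xs : ℕ → X, (∀ n, ‖xs n‖ ≤ 1) →
      Tendsto (fun n => ‖x + xs n‖) atTop (𝓝 2) →
      ∀ f : StrongDual ℝ X, Tendsto (fun n => f (xs n)) atTop (𝓝 (f x)))
    (u : X) (hu : ‖u‖ = 1)
    (hbig : closure (convexHull ℝ {y : X | ∃ T : X ≃ₗᵢ[ℝ] X, y = T u}) =
      Metric.closedBall (0 : X) 1) :
    ∀ x : X, ‖x‖ = 1 →
      ∃ us : ℕ → X, (∀ n, ∃ T : X ≃ₗᵢ[ℝ] X, us n = T u) ∧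
        ∀ f : StrongDual ℝ X, Tendsto (fun n => f (us n)) atTop (𝓝 (f x)) := by
  intro x hx
  have hxmem : x ∈ closure (convexHull ℝ {y : X | ∃ T : X ≃ₗᵢ[ℝ] X, y = T u}) := by
    simp [hbig, hx]
  have horbit : {y : X | ∃ T : X ≃ₗᵢ[ℝ] X, y = T u} ⊆ Metric.closedBall 0 ‖x‖ := by
    rintro _ ⟨T, rfl⟩
    simp [hu, hx]
  obtain ⟨us, hus, hnorm⟩ := exists_seq_mem_tendsto_norm_add_of_mem_closure_convexHull hxmem horbit
  refine ⟨us, hus, hwLUR x hx us (fun n => ?_) (by simpa [hx] using hnorm)⟩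
  simpa [hx] using horbit (hus n)

/-- In an ω-LUR Banach space, if `u` is a big point then every point of the unit sphere is a
weak limit of a sequence of images of `u` under surjective linear isometries. -/
theorem stmt12 {X : Type*} [NormedAddCommGroup X] [NormedSpace ℝ X] [CompleteSpace X]
    (hwLUR : ∀ x : X, ‖x‖ = 1 → ∀ xs : ℕ → X, (∀ n, ‖xs n‖ ≤ 1) →
      Tendsto (fun n => ‖x + xs n‖) atTop (𝓝 2) →
      ∀ f : StrongDual ℝ X, Tendsto (fun n => f (xs n)) atTop (𝓝 (f x)))
    (u : X) (hu : ‖u‖ = 1)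
    (hbig : closure (convexHull ℝ {y : X | ∃ T : X ≃ₗᵢ[ℝ] X, y = T u}) =
      Metric.closedBall (0 : X) 1) :
    ∀ x : X, ‖x‖ = 1 →
      ∃ us : ℕ → X, (∀ n, ∃ T : X ≃ₗᵢ[ℝ] X, us n = T u) ∧
        ∀ f : StrongDual ℝ X, Tendsto (fun n => f (us n)) atTop (𝓝 (f x)) :=
  stmt12_general hwLUR u hu hbig
end

section
/- Let X be an ω-LUR real Banach space admitting a big point u ∈ S_X. Then X is convex-transitive: for all x, y ∈ S_X, y lies in the closed convex hull of the isometry orbit of x. -/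
/-!
If `u` is a big point and `‖x‖ = 1`, then `x` lies in the closed convex hull of the orbit of `u`,
so some isometries `Tₙ` satisfy `‖x + Tₙ u‖ → 2`, i.e. `‖u + Tₙ⁻¹ x‖ → 2`. By ω-LUR at `u`,
`Tₙ⁻¹ x → u` weakly, and closed convex sets are weakly closed, so `u` lies in the closed convex hull
of the orbit of `x`. That set is invariant under isometries, hence contains the closed convex hull
of the orbit of `u`, which is the whole unit ball.
-/

open Filter Topology

section

variable {X : Type*} [NormedAddCommGroup X] [NormedSpace ℝ X]

def isometryOrbit (x : X) : Set X := {z : X | ∃ T : X ≃ₗᵢ[ℝ] X, z = T x}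

lemma mapsTo_isometryOrbit (R : X ≃ₗᵢ[ℝ] X) (x : X) :
    Set.MapsTo R (isometryOrbit x) (isometryOrbit x) := by
  rintro _ ⟨T, rfl⟩
  exact ⟨T.trans R, rfl⟩

lemma mapsTo_closure_convexHull_isometryOrbit (R : X ≃ₗᵢ[ℝ] X) (x : X) :
    Set.MapsTo R (closure (convexHull ℝ (isometryOrbit x)))
      (closure (convexHull ℝ (isometryOrbit x))) := by
  refine Set.MapsTo.closure ?_ R.continuous
  intro w hw
  have hR : R w ∈ convexHull ℝ (R '' isometryOrbit x) :=
    R.toLinearEquiv.toLinearMap.image_convexHull (isometryOrbit x) ▸ Set.mem_image_of_mem R hw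
  exact convexHull_mono (mapsTo_isometryOrbit R x).image_subset hR

lemma closure_convexHull_isometryOrbit_subset {u x : X}
    (hu : u ∈ closure (convexHull ℝ (isometryOrbit x))) :
    closure (convexHull ℝ (isometryOrbit u)) ⊆ closure (convexHull ℝ (isometryOrbit x)) := by
  refine closure_minimal (convexHull_min ?_ (convex_convexHull ℝ _).closure) isClosed_closure
  rintro _ ⟨R, rfl⟩
  exact mapsTo_closure_convexHull_isometryOrbit R x hu

lemma Convex.mem_of_forall_tendsto_dual {C : Set X} (hC : Convex ℝ C) (hCc : IsClosed C)
    {zs : ℕ → X} {u : X} (hzs : ∀ n, zs n ∈ C)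
    (hweak : ∀ f : StrongDual ℝ X, Tendsto (fun n => f (zs n)) atTop (𝓝 (f u))) : u ∈ C := by
  by_contra hu
  obtain ⟨f, c, hfC, hcf⟩ := geometric_hahn_banach_closed_point hC hCc hu
  have : f u ≤ c := le_of_tendsto (hweak f) (Eventually.of_forall fun n => (hfC _ (hzs n)).le)
  linarith

lemma exists_mem_two_mul_norm_sub_lt_norm_add {s : Set X} {x : X}
    (hx : x ∈ closure (convexHull ℝ s)) {ε : ℝ} (hε : 0 < ε) :
    ∃ z ∈ s, 2 * ‖x‖ - ε < ‖x + z‖ := by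
  obtain ⟨c, hc, hxc⟩ := Metric.mem_closure_iff.mp hx ε hε
  -- `‖x + ·‖` is convex, so its value at `c ∈ convexHull s` is dominated at some point of `s`.
  obtain ⟨z, hz, hcz⟩ := convexHull_exists_dist_ge hc (-x)
  refine ⟨z, hz, ?_⟩
  rw [dist_eq_norm] at hxc
  rw [dist_eq_norm, dist_eq_norm, sub_neg_eq_add, sub_neg_eq_add, add_comm c, add_comm z] at hcz
  have : ‖x + x‖ ≤ ‖x + c‖ + ‖x - c‖ := by
    simpa only [add_add_sub_cancel] using norm_add_le (x + c) (x - c)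
  rw [← two_smul ℝ x, norm_smul, Real.norm_two] at this
  linarith

lemma exists_seq_tendsto_norm_add {s : Set X} {x : X} (hx : x ∈ closure (convexHull ℝ s))
    (hs : ∀ z ∈ s, ‖z‖ ≤ ‖x‖) :
    ∃ zs : ℕ → X, (∀ n, zs n ∈ s) ∧ Tendsto (fun n => ‖x + zs n‖) atTop (𝓝 (2 * ‖x‖)) := by
  choose zs hzs hlow using fun n : ℕ =>
    exists_mem_two_mul_norm_sub_lt_norm_add hx (Nat.one_div_pos_of_nat (n := n))
  refine ⟨zs, hzs, tendsto_of_tendsto_of_tendsto_of_le_of_le ?_ tendsto_const_nhds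
    (fun n => (hlow n).le) fun n => ?_⟩
  · simpa using tendsto_one_div_add_atTop_nhds_zero_nat.const_sub (2 * ‖x‖)
  · linarith [norm_add_le x (zs n), hs _ (hzs n)]

end

theorem stmt13_general {X : Type*} [NormedAddCommGroup X] [NormedSpace ℝ X]
    (hwLUR : ∀ x : X, ‖x‖ = 1 → ∀ xs : ℕ → X, (∀ n, ‖xs n‖ ≤ 1) →
      Tendsto (fun n => ‖x + xs n‖) atTop (𝓝 2) →
      ∀ f : StrongDual ℝ X, Tendsto (fun n => f (xs n)) atTop (𝓝 (f x)))
    (u : X) (hu : ‖u‖ = 1)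
    (hbig : closure (convexHull ℝ {y : X | ∃ T : X ≃ₗᵢ[ℝ] X, y = T u}) =
      Metric.closedBall (0 : X) 1) :
    ∀ x y : X, ‖x‖ = 1 → ‖y‖ = 1 →
      y ∈ closure (convexHull ℝ {z : X | ∃ T : X ≃ₗᵢ[ℝ] X, z = T x}) := by
  change closure (convexHull ℝ (isometryOrbit u)) = _ at hbig
  intro x y hx hy
  change y ∈ closure (convexHull ℝ (isometryOrbit x))
  have hx_mem : x ∈ closure (convexHull ℝ (isometryOrbit u)) := by simp [hbig, hx]
  obtain ⟨zs, hzs, hlim⟩ := exists_seq_tendsto_norm_add hx_mem (by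
    rintro _ ⟨T, rfl⟩
    rw [T.norm_map, hu, hx])
  choose T hT using hzs
  have hrot : ∀ n, ‖u + (T n).symm x‖ = ‖x + zs n‖ := fun n => by
    rw [← (T n).norm_map, map_add, LinearIsometryEquiv.apply_symm_apply, hT n, add_comm]
  have hweak := hwLUR u hu (fun n => (T n).symm x)
    (fun n => by rw [LinearIsometryEquiv.norm_map, hx]) (by simpa only [hrot, hx, mul_one] using hlim)
  have hu_mem : u ∈ closure (convexHull ℝ (isometryOrbit x)) :=
    (convex_convexHull ℝ _).closure.mem_of_forall_tendsto_dual isClosed_closure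
      (fun n => subset_closure (subset_convexHull ℝ _ ⟨(T n).symm, rfl⟩)) hweak
  exact closure_convexHull_isometryOrbit_subset hu_mem (by simp [hbig, hy])

/-- An ω-LUR Banach space admitting a big point is convex-transitive. -/
theorem stmt13 {X : Type*} [NormedAddCommGroup X] [NormedSpace ℝ X] [CompleteSpace X]
    (hwLUR : ∀ x : X, ‖x‖ = 1 → ∀ xs : ℕ → X, (∀ n, ‖xs n‖ ≤ 1) →
      Tendsto (fun n => ‖x + xs n‖) atTop (𝓝 2) →
      ∀ f : StrongDual ℝ X, Tendsto (fun n => f (xs n)) atTop (𝓝 (f x)))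
    (u : X) (hu : ‖u‖ = 1)
    (hbig : closure (convexHull ℝ {y : X | ∃ T : X ≃ₗᵢ[ℝ] X, y = T u}) =
      Metric.closedBall (0 : X) 1) :
    ∀ x y : X, ‖x‖ = 1 → ‖y‖ = 1 →
      y ∈ closure (convexHull ℝ {z : X | ∃ T : X ≃ₗᵢ[ℝ] X, z = T x}) :=
  stmt13_general hwLUR u hu hbig
end

section
/- Let X be a real Banach space, (x_n, f_n) ∈ S_X × S_{X*} pairs with f_n(x_n) = 1, and let (y, g) ∈ S_X × S_{X*} with g(y) = 1 where y is a smooth point. Suppose there are finitely supported convex coefficients (c_n^{(k)})_n, k ∈ ℕ, such that Σ_n c_n^{(k)} x_n → y weakly and Σ_n c_n^{(k)} f_n(y) → 1 as k → ∞. Then the operators P_k = Σ_n c_n^{(k)} f_n ⊗ x_n converge to g ⊗ y in the weak operator topology. -/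
/-!
By Banach–Alaoglu, a sequence `h k` in the unit ball of `X*` with `h k y → 1` has all its weak-*
cluster points in the unit ball and equal to `1` at `y`; smoothness of `y` forces them to be `g`,
so `h k → g` weak-*.

Given weights `a n ∈ [1, B]`, apply this to the normalised averages
`H k = (∑ c k n a n)⁻¹ ∑ c k n a n f n`, for which `0 ≤ 1 - H k y ≤ B (1 - ∑ c k n f n y)`;
this gives `∑ c k n a n (f n v - g v) → 0`, and by shifting `a` by a constant, the same holds for
every bounded `a`. For `a n = φ (x n)`,
`φ (P k v) = ∑ c k n φ (x n) (f n v - g v) + g v φ (∑ c k n x n) → g v φ y`.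
-/

open Filter Topology

theorem tendsto_apply_of_tendsto_apply_smoothPoint {X α : Type*} [NormedAddCommGroup X]
    [NormedSpace ℝ X] {y : X} {g : StrongDual ℝ X} (hy : ‖y‖ ≤ 1)
    (hsmooth : ∀ h : StrongDual ℝ X, ‖h‖ = 1 → h y = 1 → h = g)
    {l : Filter α} {h : α → StrongDual ℝ X} (hnorm : ∀ k, ‖h k‖ ≤ 1)
    (hhy : Tendsto (fun k => h k y) l (𝓝 1)) (v : X) :
    Tendsto (fun k => h k v) l (𝓝 (g v)) := by
  suffices Tendsto (fun k => StrongDual.toWeakDual (h k)) l (𝓝 (StrongDual.toWeakDual g)) from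
    ((WeakDual.eval_continuous v).tendsto _).comp this
  refine (WeakDual.isCompact_closedBall (𝕜 := ℝ) 0 1).tendsto_nhds_of_unique_mapClusterPt
    (Eventually.of_forall fun k => by simpa using hnorm k) fun H hH hcluster => ?_
  have hHy : H y = 1 :=
    eq_of_nhds_neBot <|
      (hcluster.continuousAt_comp (WeakDual.eval_continuous y).continuousAt).clusterPt.mono hhy
  have hHnorm : ‖WeakDual.toStrongDual H‖ = 1 := by
    refine le_antisymm (by simpa using hH) ?_
    simpa [hHy] using (WeakDual.toStrongDual H).unit_le_opNorm y hy
  exact congrArg StrongDual.toWeakDual (hsmooth _ hHnorm hHy)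

theorem apply_le_one_of_norm_le_one {X : Type*} [NormedAddCommGroup X] [NormedSpace ℝ X]
    {f : StrongDual ℝ X} {y : X} (hf : ‖f‖ ≤ 1) (hy : ‖y‖ ≤ 1) : f y ≤ 1 :=
  (Real.le_norm_self _).trans <| (f.unit_le_opNorm y hy).trans hf

section WeightedAverage

variable {X ι : Type*} [NormedAddCommGroup X] [NormedSpace ℝ X]

noncomputable def weightedAverage (t : Finset ι) (w : ι → ℝ) (f : ι → StrongDual ℝ X) :
    StrongDual ℝ X :=
  (∑ n ∈ t, w n)⁻¹ • ∑ n ∈ t, w n • f n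

theorem weightedAverage_apply (t : Finset ι) (w : ι → ℝ) (f : ι → StrongDual ℝ X) (z : X) :
    weightedAverage t w f z = (∑ n ∈ t, w n)⁻¹ * ∑ n ∈ t, w n * f n z := by
  simp [weightedAverage]

theorem norm_weightedAverage_le_one {t : Finset ι} {w : ι → ℝ} {f : ι → StrongDual ℝ X}
    (hw : ∀ n ∈ t, 0 ≤ w n) (hf : ∀ n ∈ t, ‖f n‖ ≤ 1) : ‖weightedAverage t w f‖ ≤ 1 := by
  have hsum : ‖∑ n ∈ t, w n • f n‖ ≤ ∑ n ∈ t, w n :=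
    norm_sum_le_of_le _ fun n hn => by
      rw [norm_smul, Real.norm_of_nonneg (hw n hn)]
      exact mul_le_of_le_one_right (hw n hn) (hf n hn)
  rw [weightedAverage, norm_smul, Real.norm_of_nonneg (inv_nonneg.2 (Finset.sum_nonneg hw))]
  exact inv_mul_le_one_of_le₀ hsum (Finset.sum_nonneg hw)

theorem one_le_sum_mul_of_one_le {t : Finset ι} {c a : ι → ℝ} (hc0 : ∀ n ∈ t, 0 ≤ c n)
    (hcsum : ∑ n ∈ t, c n = 1) (ha1 : ∀ n ∈ t, 1 ≤ a n) : 1 ≤ ∑ n ∈ t, c n * a n :=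
  hcsum.symm.le.trans <| Finset.sum_le_sum fun n hn => le_mul_of_one_le_right (hc0 n hn) (ha1 n hn)

theorem one_sub_weightedAverage_apply_le {t : Finset ι} {c a : ι → ℝ} {B : ℝ}
    {f : ι → StrongDual ℝ X} {y : X} (hc0 : ∀ n ∈ t, 0 ≤ c n) (hcsum : ∑ n ∈ t, c n = 1)
    (ha1 : ∀ n ∈ t, 1 ≤ a n) (haB : ∀ n ∈ t, a n ≤ B) (hfy : ∀ n ∈ t, f n y ≤ 1) :
    1 - weightedAverage t (fun n => c n * a n) f y ≤ B * (1 - ∑ n ∈ t, c n * f n y) := by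
  have hW1 := one_le_sum_mul_of_one_le hc0 hcsum ha1
  have hfy1 : ∀ n ∈ t, 0 ≤ 1 - f n y := fun n hn => sub_nonneg.2 (hfy n hn)
  have hdefect : 1 - weightedAverage t (fun n => c n * a n) f y =
      (∑ n ∈ t, c n * a n)⁻¹ * ∑ n ∈ t, c n * a n * (1 - f n y) := by
    simp only [weightedAverage_apply, mul_sub, mul_one, Finset.sum_sub_distrib,
      inv_mul_cancel₀ (zero_lt_one.trans_le hW1).ne']
  calc 1 - weightedAverage t (fun n => c n * a n) f y ≤ ∑ n ∈ t, c n * a n * (1 - f n y) := by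
        rw [hdefect]
        refine mul_le_of_le_one_left (Finset.sum_nonneg fun n hn => ?_) (inv_le_one_of_one_le₀ hW1)
        exact mul_nonneg (mul_nonneg (hc0 n hn) (zero_le_one.trans (ha1 n hn))) (hfy1 n hn)
    _ ≤ ∑ n ∈ t, c n * B * (1 - f n y) := by
        gcongr with n hn
        · exact hfy1 n hn
        · exact hc0 n hn
        · exact haB n hn
    _ = B * ∑ n ∈ t, c n - B * ∑ n ∈ t, c n * f n y := by
        rw [Finset.mul_sum, Finset.mul_sum, ← Finset.sum_sub_distrib]
        exact Finset.sum_congr rfl fun n _ => by ring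
    _ = B * (1 - ∑ n ∈ t, c n * f n y) := by rw [hcsum, mul_sub]

end WeightedAverage

section ConvexAverages

variable {X ι α : Type*} [NormedAddCommGroup X] [NormedSpace ℝ X] {y : X} {g : StrongDual ℝ X}
  {fs : ι → StrongDual ℝ X} {l : Filter α} {s : α → Finset ι} {c : α → ι → ℝ}

theorem tendsto_sum_mul_sub_of_one_le_of_le (hy : ‖y‖ ≤ 1)
    (hsmooth : ∀ h : StrongDual ℝ X, ‖h‖ = 1 → h y = 1 → h = g) (hfs : ∀ n, ‖fs n‖ ≤ 1)
    (hc0 : ∀ k n, 0 ≤ c k n) (hcsum : ∀ k, ∑ n ∈ s k, c k n = 1)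
    (hfy : Tendsto (fun k => ∑ n ∈ s k, c k n * fs n y) l (𝓝 1))
    {a : ι → ℝ} {B : ℝ} (ha1 : ∀ n, 1 ≤ a n) (haB : ∀ n, a n ≤ B) (v : X) :
    Tendsto (fun k => ∑ n ∈ s k, c k n * a n * (fs n v - g v)) l (𝓝 0) := by
  set W : α → ℝ := fun k => ∑ n ∈ s k, c k n * a n
  have hW1 : ∀ k, 1 ≤ W k := fun k =>
    one_le_sum_mul_of_one_le (fun n _ => hc0 k n) (hcsum k) (fun n _ => ha1 n)
  have hWB : ∀ k, W k ≤ B := fun k => by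
    calc W k ≤ ∑ n ∈ s k, c k n * B :=
          Finset.sum_le_sum fun n _ => mul_le_mul_of_nonneg_left (haB n) (hc0 k n)
      _ = B := by rw [← Finset.sum_mul, hcsum k, one_mul]
  set H : α → StrongDual ℝ X := fun k => weightedAverage (s k) (fun n => c k n * a n) fs
  have hHnorm : ∀ k, ‖H k‖ ≤ 1 := fun k => norm_weightedAverage_le_one
    (fun n _ => mul_nonneg (hc0 k n) (zero_le_one.trans (ha1 n))) (fun n _ => hfs n)
  have hHy : Tendsto (fun k => H k y) l (𝓝 1) := by
    have hdefect : Tendsto (fun k => 1 - H k y) l (𝓝 0) :=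
      squeeze_zero (fun k => sub_nonneg.2 (apply_le_one_of_norm_le_one (hHnorm k) hy))
        (fun k => one_sub_weightedAverage_apply_le (fun n _ => hc0 k n) (hcsum k)
          (fun n _ => ha1 n) (fun n _ => haB n) (fun n _ => apply_le_one_of_norm_le_one (hfs n) hy))
        (by simpa using ((tendsto_const_nhds (x := 1)).sub hfy).const_mul B)
    simpa using (tendsto_const_nhds (x := 1)).sub hdefect
  have hHv := tendsto_apply_of_tendsto_apply_smoothPoint hy hsmooth hHnorm hHy v
  have hexpand : ∀ k, ∑ n ∈ s k, c k n * a n * (fs n v - g v) = W k * (H k v - g v) := fun k => by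
    rw [weightedAverage_apply, mul_sub, ← mul_assoc,
      mul_inv_cancel₀ (zero_lt_one.trans_le (hW1 k)).ne', one_mul]
    simp only [W, mul_sub, Finset.sum_sub_distrib, Finset.sum_mul]
  simp only [hexpand]
  refine squeeze_zero_norm (fun k => ?_)
    (by simpa using (tendsto_sub_nhds_zero_iff.2 hHv).norm.const_mul B)
  rw [norm_mul, Real.norm_of_nonneg (zero_le_one.trans (hW1 k))]
  exact mul_le_mul_of_nonneg_right (hWB k) (norm_nonneg _)

theorem tendsto_sum_mul_sub_of_abs_le (hy : ‖y‖ ≤ 1)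
    (hsmooth : ∀ h : StrongDual ℝ X, ‖h‖ = 1 → h y = 1 → h = g) (hfs : ∀ n, ‖fs n‖ ≤ 1)
    (hc0 : ∀ k n, 0 ≤ c k n) (hcsum : ∀ k, ∑ n ∈ s k, c k n = 1)
    (hfy : Tendsto (fun k => ∑ n ∈ s k, c k n * fs n y) l (𝓝 1))
    {a : ι → ℝ} {A : ℝ} (ha : ∀ n, |a n| ≤ A) (v : X) :
    Tendsto (fun k => ∑ n ∈ s k, c k n * a n * (fs n v - g v)) l (𝓝 0) := by
  have hshifted := tendsto_sum_mul_sub_of_one_le_of_le hy hsmooth hfs hc0 hcsum hfy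
    (a := fun n => a n + (A + 1)) (B := 2 * A + 1)
    (fun n => by linarith [neg_abs_le (a n), ha n])
    (fun n => by linarith [le_abs_self (a n), ha n]) v
  have hconst := tendsto_sum_mul_sub_of_one_le_of_le hy hsmooth hfs hc0 hcsum hfy
    (a := fun _ => 1) (B := 1) (fun _ => le_rfl) (fun _ => le_rfl) v
  have := hshifted.sub (hconst.const_mul (A + 1))
  rw [mul_zero, sub_zero] at this
  refine this.congr fun k => ?_
  rw [Finset.mul_sum, ← Finset.sum_sub_distrib]
  exact Finset.sum_congr rfl fun n _ => by ring

end ConvexAverages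

theorem finsum_smul_eq_sum_of_support_finite {ι R M : Type*} [Semiring R] [AddCommMonoid M]
    [Module R M] {c : ι → R} (hc : (Function.support c).Finite) (F : ι → M) :
    ∑ᶠ n, c n • F n = ∑ n ∈ hc.toFinset, c n • F n :=
  finsum_eq_sum_of_support_subset _ <|
    (Function.support_smul_subset_left c F).trans hc.coe_toFinset.ge

theorem stmt14_general {X : Type*} [NormedAddCommGroup X] [NormedSpace ℝ X]
    (xs : ℕ → X) (fs : ℕ → StrongDual ℝ X)
    (hxs : ∀ n, ‖xs n‖ = 1) (hfs : ∀ n, ‖fs n‖ = 1)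
    (y : X) (g : StrongDual ℝ X) (hy : ‖y‖ = 1)
    (hsmooth : ∀ h : StrongDual ℝ X, ‖h‖ = 1 → h y = 1 → h = g)
    (c : ℕ → ℕ → ℝ) (hc0 : ∀ k n, 0 ≤ c k n)
    (hcfin : ∀ k, (Function.support (c k)).Finite) (hcsum : ∀ k, ∑ᶠ n, c k n = 1)
    (hweak : ∀ φ : StrongDual ℝ X,
      Tendsto (fun k => φ (∑ᶠ n, c k n • xs n)) atTop (𝓝 (φ y)))
    (hfy : Tendsto (fun k => ∑ᶠ n, c k n * fs n y) atTop (𝓝 1)) :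
    ∀ v : X, ∀ φ : StrongDual ℝ X,
      Tendsto (fun k => φ (∑ᶠ n, c k n • (fs n v • xs n))) atTop (𝓝 (φ (g v • y))) := by
  intro v φ
  set s : ℕ → Finset ℕ := fun k => (hcfin k).toFinset
  have hφx : ∀ n, |φ (xs n)| ≤ ‖φ‖ := fun n => by simpa [hxs n] using φ.le_opNorm (xs n)
  have hφavg : Tendsto (fun k => ∑ n ∈ s k, c k n * φ (xs n)) atTop (𝓝 (φ y)) :=
    (hweak φ).congr fun k => by
      simp only [finsum_smul_eq_sum_of_support_finite (hcfin k), map_sum, map_smul, smul_eq_mul, s]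
  have hdefect := tendsto_sum_mul_sub_of_abs_le hy.le hsmooth (fun n => (hfs n).le) hc0
    (fun k => (finsum_eq_sum _ (hcfin k)).symm.trans (hcsum k))
    (hfy.congr fun k => finsum_smul_eq_sum_of_support_finite (hcfin k) (fun n => fs n y)) hφx v
  have hsplit : ∀ k, φ (∑ᶠ n, c k n • (fs n v • xs n)) =
      ∑ n ∈ s k, c k n * φ (xs n) * (fs n v - g v) + (∑ n ∈ s k, c k n * φ (xs n)) * g v := by
    intro k
    rw [finsum_smul_eq_sum_of_support_finite (hcfin k), map_sum, Finset.sum_mul,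
      ← Finset.sum_add_distrib]
    exact Finset.sum_congr rfl fun n _ => by simp only [map_smul, smul_eq_mul]; ring
  rw [map_smul, smul_eq_mul, mul_comm]
  simpa only [hsplit, zero_add] using hdefect.add (hφavg.mul_const (g v))

/-- Lemma 2.4 (first part): if `Σ_n c_n^{(k)} x_n → y` weakly and `Σ_n c_n^{(k)} f_n(y) → 1`,
with `y` a smooth point supported by `g`, then `P_k = Σ_n c_n^{(k)} f_n ⊗ x_n → g ⊗ y` in
the weak operator topology. -/
theorem stmt14 {X : Type*} [NormedAddCommGroup X] [NormedSpace ℝ X] [CompleteSpace X]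
    (xs : ℕ → X) (fs : ℕ → StrongDual ℝ X)
    (hxs : ∀ n, ‖xs n‖ = 1) (hfs : ∀ n, ‖fs n‖ = 1) (hpair : ∀ n, fs n (xs n) = 1)
    (y : X) (g : StrongDual ℝ X) (hy : ‖y‖ = 1) (hg : ‖g‖ = 1) (hgy : g y = 1)
    (hsmooth : ∀ h : StrongDual ℝ X, ‖h‖ = 1 → h y = 1 → h = g)
    (c : ℕ → ℕ → ℝ) (hc0 : ∀ k n, 0 ≤ c k n)
    (hcfin : ∀ k, (Function.support (c k)).Finite) (hcsum : ∀ k, ∑ᶠ n, c k n = 1)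
    (hweak : ∀ φ : StrongDual ℝ X,
      Tendsto (fun k => φ (∑ᶠ n, c k n • xs n)) atTop (𝓝 (φ y)))
    (hfy : Tendsto (fun k => ∑ᶠ n, c k n * fs n y) atTop (𝓝 1)) :
    ∀ v : X, ∀ φ : StrongDual ℝ X,
      Tendsto (fun k => φ (∑ᶠ n, c k n • (fs n v • xs n))) atTop (𝓝 (φ (g v • y))) :=
  stmt14_general xs fs hxs hfs y g hy hsmooth c hc0 hcfin hcsum hweak hfy
end

section
/- Let X be a real Banach space, (x_n, f_n) ∈ S_X × S_{X*} Flinn pairs (f_n(x_n)=1 and ‖I - f_n ⊗ x_n‖ = 1), and (y, g) ∈ S_X × S_{X*} with g(y)=1, y smooth. If there exist finitely supported convex coefficients (c_n^{(k)})_n with Σ_n c_n^{(k)} x_n → y weakly and Σ_n c_n^{(k)} f_n(y) → 1 as k → ∞, then (y, g) is a Flinn pair, i.e. ‖I - g ⊗ y‖ = 1. -/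
/-!
Write `P = I - g ⊗ y`. Since `g y = 1`, `P` is an idempotent, and it is nonzero because `X` is not
spanned by `y` alone (otherwise every rank-one projection, in particular `I - f₀ ⊗ x₀`, would
vanish); hence `‖P‖ ≥ 1`. For `‖P v‖ ≤ ‖v‖`, put `t = g v` and `z_k = Σ c_n^{(k)} x_n`. The Flinn
property of each `(x_n, f_n)` gives `‖v - t z_k‖ ≤ ‖v‖ + Σ c_n^{(k)} |f_n v - t|`. Smoothness of `y`
and weak* compactness of the dual ball show that `f v` is uniformly close to `g v` once
`f y` is close to `1`, so the averaged error tends to `0` because the averages of `1 - f_n y` do.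
Since `v - t z_k → v - t y` weakly and the norm is weakly lower semicontinuous,
`‖v - t y‖ ≤ ‖v‖`.
-/

open Filter Topology

theorem IsIdempotentElem.one_le_norm {R : Type*} [NonUnitalSeminormedRing R] {p : R}
    (hp : IsIdempotentElem p) (h0 : ‖p‖ ≠ 0) : 1 ≤ ‖p‖ := by
  have hpos : 0 < ‖p‖ := (norm_nonneg p).lt_of_ne' h0
  have : ‖p‖ * 1 ≤ ‖p‖ * ‖p‖ := by simpa [hp.eq] using norm_mul_le p p
  exact le_of_mul_le_mul_left this hpos

theorem tendsto_sum_mul_zero_of_modulus {ι κ : Type*} {l : Filter κ} {s : κ → Finset ι}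
    {c : κ → ι → ℝ} (hc0 : ∀ k n, 0 ≤ c k n) (hc1 : ∀ k, ∑ n ∈ s k, c k n = 1)
    {a d : ι → ℝ} {M : ℝ} (ha0 : ∀ n, 0 ≤ a n) (haM : ∀ n, a n ≤ M) (hd0 : ∀ n, 0 ≤ d n)
    (hmod : ∀ ε > 0, ∃ δ > 0, ∀ n, d n < δ → a n < ε)
    (hD : Tendsto (fun k => ∑ n ∈ s k, c k n * d n) l (𝓝 0)) :
    Tendsto (fun k => ∑ n ∈ s k, c k n * a n) l (𝓝 0) := by
  refine tendsto_order.2 ⟨fun r hr => Eventually.of_forall fun k =>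
    hr.trans_le (Finset.sum_nonneg fun n _ => mul_nonneg (hc0 k n) (ha0 n)), fun r hr => ?_⟩
  obtain ⟨δ, hδ, hδa⟩ := hmod (r / 2) (by positivity)
  -- a Markov-type split: terms with `d n < δ` are small, the others are paid for by `d n / δ ≥ 1`
  have hterm : ∀ n, a n ≤ r / 2 + M / δ * d n := by
    intro n
    have hM : 0 ≤ M := (ha0 n).trans (haM n)
    by_cases hdn : d n < δ
    · have : 0 ≤ M / δ * d n := mul_nonneg (div_nonneg hM hδ.le) (hd0 n)
      linarith [hδa n hdn]
    · have : M ≤ M / δ * d n := by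
        rw [div_mul_eq_mul_div, le_div_iff₀ hδ]
        exact mul_le_mul_of_nonneg_left (not_lt.1 hdn) hM
      linarith [haM n]
  have hlim : Tendsto (fun k => r / 2 + M / δ * ∑ n ∈ s k, c k n * d n) l (𝓝 (r / 2)) := by
    simpa using (hD.const_mul (M / δ)).const_add (r / 2)
  filter_upwards [hlim.eventually (gt_mem_nhds (half_lt_self hr))] with k hk
  calc ∑ n ∈ s k, c k n * a n ≤ ∑ n ∈ s k, c k n * (r / 2 + M / δ * d n) :=
        Finset.sum_le_sum fun n _ => mul_le_mul_of_nonneg_left (hterm n) (hc0 k n)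
    _ = r / 2 + M / δ * ∑ n ∈ s k, c k n * d n := by
        simp only [mul_add, Finset.sum_add_distrib, ← Finset.sum_mul, hc1, one_mul,
          Finset.mul_sum, mul_left_comm (c k _)]
    _ < r := hk

section

variable {X : Type*} [NormedAddCommGroup X] [NormedSpace ℝ X]

theorem StrongDual.apply_le_one {f : StrongDual ℝ X} {y : X} (hf : ‖f‖ ≤ 1) (hy : ‖y‖ ≤ 1) :
    f y ≤ 1 :=
  (le_abs_self _).trans <| (f.le_of_opNorm_le hf y).trans (by simpa using hy)

theorem exists_pos_forall_abs_sub_apply_lt {y : X} {g : StrongDual ℝ X} (hy : ‖y‖ = 1)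
    (hsmooth : ∀ h : StrongDual ℝ X, ‖h‖ = 1 → h y = 1 → h = g) (v : X) {ε : ℝ} (hε : 0 < ε) :
    ∃ δ > 0, ∀ f : StrongDual ℝ X, ‖f‖ ≤ 1 → 1 - δ < f y → |f v - g v| < ε := by
  set K : Set (WeakDual ℝ X) :=
    WeakDual.toStrongDual ⁻¹' Metric.closedBall 0 1 ∩ {f | ε ≤ |f v - g v|}
  have hK : IsCompact K :=
    (WeakDual.isCompact_closedBall 0 1).inter_right <|
      isClosed_le continuous_const ((WeakDual.eval_continuous v).sub continuous_const).abs
  rcases K.eq_empty_or_nonempty with hK0 | hKne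
  · refine ⟨1, one_pos, fun f hf _ => not_le.1 fun hfv => ?_⟩
    exact hK0.subset (⟨by simpa using hf, hfv⟩ : StrongDual.toWeakDual f ∈ K)
  obtain ⟨f₀, ⟨hf₀, hf₀v⟩, hmax⟩ := hK.exists_isMaxOn hKne (WeakDual.eval_continuous y).continuousOn
  have hf₀1 : ‖WeakDual.toStrongDual f₀‖ ≤ 1 := by simpa using hf₀
  -- the maximiser cannot attain `1`, otherwise it would be a second support functional at `y`
  have hf₀y : f₀ y < 1 := by
    refine (StrongDual.apply_le_one hf₀1 hy.le).lt_of_ne fun h => ?_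
    have hnorm : ‖WeakDual.toStrongDual f₀‖ = 1 :=
      le_antisymm hf₀1 (by simpa [h, hy] using (WeakDual.toStrongDual f₀).le_opNorm y)
    have hf₀g : f₀ v = g v := congrArg (· v) (hsmooth _ hnorm h)
    have : ε ≤ |f₀ v - g v| := hf₀v
    rw [hf₀g, sub_self, abs_zero] at this
    linarith
  refine ⟨(1 - f₀ y) / 2, by linarith, fun f hf hfy => not_le.1 fun hfv => ?_⟩
  have : f y ≤ f₀ y := hmax (⟨by simpa using hf, hfv⟩ : StrongDual.toWeakDual f ∈ K)
  linarith

theorem norm_sub_smul_le_of_norm_id_sub_smulRight_le {f : StrongDual ℝ X} {x : X} (hx : ‖x‖ ≤ 1)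
    (hF : ‖ContinuousLinearMap.id ℝ X - f.smulRight x‖ ≤ 1) (v : X) (t : ℝ) :
    ‖v - t • x‖ ≤ ‖v‖ + |f v - t| := by
  have hproj : ‖v - f v • x‖ ≤ ‖v‖ := by
    simpa using (ContinuousLinearMap.id ℝ X - f.smulRight x).le_of_opNorm_le hF v
  have hrest : ‖(f v - t) • x‖ ≤ |f v - t| := by
    simpa [norm_smul] using mul_le_of_le_one_right (abs_nonneg (f v - t)) hx
  calc ‖v - t • x‖ = ‖(v - f v • x) + (f v - t) • x‖ := by rw [sub_smul]; abel_nf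
    _ ≤ ‖v‖ + |f v - t| := (norm_add_le _ _).trans (add_le_add hproj hrest)

theorem norm_sub_smul_sum_le {ι : Type*} (s : Finset ι) {c : ι → ℝ} (hc0 : ∀ n ∈ s, 0 ≤ c n)
    (hc1 : ∑ n ∈ s, c n = 1) (x : ι → X) (v : X) (t : ℝ) :
    ‖v - t • ∑ n ∈ s, c n • x n‖ ≤ ∑ n ∈ s, c n * ‖v - t • x n‖ := by
  have hsplit : v - t • ∑ n ∈ s, c n • x n = ∑ n ∈ s, c n • (v - t • x n) := by
    simp only [smul_sub, Finset.sum_sub_distrib, ← Finset.sum_smul, hc1, one_smul,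
      Finset.smul_sum, smul_comm t]
  rw [hsplit]
  refine (norm_sum_le _ _).trans (Finset.sum_le_sum fun n hn => ?_)
  rw [norm_smul, Real.norm_of_nonneg (hc0 n hn)]

theorem norm_le_of_tendsto_apply {κ : Type*} {l : Filter κ} [l.NeBot] {z : κ → X} {z₀ : X}
    (hz : ∀ φ : StrongDual ℝ X, Tendsto (fun k => φ (z k)) l (𝓝 (φ z₀)))
    {b : κ → ℝ} {B : ℝ} (hb : Tendsto b l (𝓝 B)) (hzb : ∀ k, ‖z k‖ ≤ b k) : ‖z₀‖ ≤ B := by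
  obtain ⟨ψ, hψ, hψz₀⟩ := exists_dual_vector'' ℝ z₀
  have hψz : ∀ k, ψ (z k) ≤ b k := fun k =>
    (le_abs_self _).trans <| ((ψ.le_of_opNorm_le hψ (z k)).trans (by simp)).trans (hzb k)
  calc ‖z₀‖ = ψ z₀ := hψz₀.symm
    _ ≤ B := le_of_tendsto_of_tendsto (hz ψ) hb (Eventually.of_forall hψz)

theorem ContinuousLinearMap.isIdempotentElem_smulRight {g : StrongDual ℝ X} {y : X}
    (hgy : g y = 1) : IsIdempotentElem (g.smulRight y) :=
  ContinuousLinearMap.ext fun w => by simp [hgy]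

theorem id_sub_smulRight_eq_zero_of_apply_eq_one {f g : StrongDual ℝ X} {x y : X} (hfx : f x = 1)
    (hg : ContinuousLinearMap.id ℝ X - g.smulRight y = 0) :
    ContinuousLinearMap.id ℝ X - f.smulRight x = 0 := by
  have hspan : ∀ w, g w • y = w := fun w => by
    have h := congr($hg w)
    simp only [sub_apply, ContinuousLinearMap.id_apply,
      ContinuousLinearMap.smulRight_apply, zero_apply, sub_eq_zero] at h
    exact h.symm
  have hf : ∀ w, f w = g w * f y := fun w => by
    conv_lhs => rw [← hspan w]
    simp
  ext w
  suffices f w • x = w by simp [this]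
  calc f w • x = (g w * f y) • g x • y := by rw [hf, hspan x]
    _ = (g w * f x) • y := by rw [smul_smul, hf x]; congr 1; ring
    _ = w := by rw [hfx, mul_one, hspan]

theorem norm_sub_apply_smul_le_of_flinn_approx
    (xs : ℕ → X) (fs : ℕ → StrongDual ℝ X) (hxs : ∀ n, ‖xs n‖ ≤ 1) (hfs : ∀ n, ‖fs n‖ ≤ 1)
    (hFlinn : ∀ n, ‖ContinuousLinearMap.id ℝ X - (fs n).smulRight (xs n)‖ ≤ 1)
    {y : X} {g : StrongDual ℝ X} (hy : ‖y‖ = 1)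
    (hsmooth : ∀ h : StrongDual ℝ X, ‖h‖ = 1 → h y = 1 → h = g)
    (c : ℕ → ℕ → ℝ) (hc0 : ∀ k n, 0 ≤ c k n)
    (hcfin : ∀ k, (Function.support (c k)).Finite) (hcsum : ∀ k, ∑ᶠ n, c k n = 1)
    (hweak : ∀ φ : StrongDual ℝ X,
      Tendsto (fun k => φ (∑ᶠ n, c k n • xs n)) atTop (𝓝 (φ y)))
    (hfy : Tendsto (fun k => ∑ᶠ n, c k n * fs n y) atTop (𝓝 1)) (v : X) :
    ‖v - g v • y‖ ≤ ‖v‖ := by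
  set t := g v
  set s : ℕ → Finset ℕ := fun k => (hcfin k).toFinset
  have hsupp : ∀ k, Function.support (c k) ⊆ s k := fun k => by simp [s]
  have hs1 : ∀ k, ∑ n ∈ s k, c k n = 1 := fun k => (finsum_eq_sum _ _).symm.trans (hcsum k)
  have hsx : ∀ k, ∑ᶠ n, c k n • xs n = ∑ n ∈ s k, c k n • xs n := fun k =>
    finsum_eq_sum_of_support_subset _ ((Function.support_smul_subset_left _ _).trans (hsupp k))
  have hsfy : ∀ k, ∑ᶠ n, c k n * fs n y = ∑ n ∈ s k, c k n * fs n y := fun k =>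
    finsum_eq_sum_of_support_subset _ ((Function.support_mul_subset_left _ _).trans (hsupp k))
  have hdefect : Tendsto (fun k => ∑ n ∈ s k, c k n * (1 - fs n y)) atTop (𝓝 0) := by
    simpa [mul_sub, hs1, ← hsfy] using hfy.const_sub 1
  have herr : Tendsto (fun k => ∑ n ∈ s k, c k n * |fs n v - t|) atTop (𝓝 0) := by
    refine tendsto_sum_mul_zero_of_modulus hc0 hs1 (M := ‖v‖ + |t|) (fun n => abs_nonneg _)
      (fun n => (abs_sub _ _).trans ?_)
      (fun n => sub_nonneg.2 (StrongDual.apply_le_one (hfs n) hy.le)) (fun ε hε => ?_) hdefect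
    · simpa using (fs n).le_of_opNorm_le (hfs n) v
    · obtain ⟨δ, hδ, hδε⟩ := exists_pos_forall_abs_sub_apply_lt hy hsmooth v hε
      exact ⟨δ, hδ, fun n hn => hδε (fs n) (hfs n) (by linarith)⟩
  refine norm_le_of_tendsto_apply (z := fun k => v - t • ∑ n ∈ s k, c k n • xs n)
    (fun φ => ?_) (herr.const_add ‖v‖) (fun k => ?_) |>.trans_eq (add_zero _)
  · simpa [← hsx] using ((hweak φ).const_mul t).const_sub (φ v)
  · refine (norm_sub_smul_sum_le _ (fun n _ => hc0 k n) (hs1 k) xs v t).trans ?_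
    calc ∑ n ∈ s k, c k n * ‖v - t • xs n‖ ≤ ∑ n ∈ s k, c k n * (‖v‖ + |fs n v - t|) :=
          Finset.sum_le_sum fun n _ => mul_le_mul_of_nonneg_left
            (norm_sub_smul_le_of_norm_id_sub_smulRight_le (hxs n) (hFlinn n) v t) (hc0 k n)
      _ = ‖v‖ + ∑ n ∈ s k, c k n * |fs n v - t| := by
          simp only [mul_add, Finset.sum_add_distrib, ← Finset.sum_mul, hs1, one_mul]

end

theorem stmt15_general {X : Type*} [NormedAddCommGroup X] [NormedSpace ℝ X]
    (xs : ℕ → X) (fs : ℕ → StrongDual ℝ X)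
    (hxs : ∀ n, ‖xs n‖ = 1) (hfs : ∀ n, ‖fs n‖ = 1) (hpair : ∀ n, fs n (xs n) = 1)
    (hFlinn : ∀ n, ‖ContinuousLinearMap.id ℝ X - (fs n).smulRight (xs n)‖ = 1)
    (y : X) (g : StrongDual ℝ X) (hy : ‖y‖ = 1) (hgy : g y = 1)
    (hsmooth : ∀ h : StrongDual ℝ X, ‖h‖ = 1 → h y = 1 → h = g)
    (c : ℕ → ℕ → ℝ) (hc0 : ∀ k n, 0 ≤ c k n)
    (hcfin : ∀ k, (Function.support (c k)).Finite) (hcsum : ∀ k, ∑ᶠ n, c k n = 1)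
    (hweak : ∀ φ : StrongDual ℝ X,
      Tendsto (fun k => φ (∑ᶠ n, c k n • xs n)) atTop (𝓝 (φ y)))
    (hfy : Tendsto (fun k => ∑ᶠ n, c k n * fs n y) atTop (𝓝 1)) :
    ‖ContinuousLinearMap.id ℝ X - g.smulRight y‖ = 1 := by
  have hle : ‖ContinuousLinearMap.id ℝ X - g.smulRight y‖ ≤ 1 :=
    ContinuousLinearMap.opNorm_le_bound _ zero_le_one fun v => by
      simpa using norm_sub_apply_smul_le_of_flinn_approx xs fs (fun n => (hxs n).le)
        (fun n => (hfs n).le) (fun n => (hFlinn n).le) hy hsmooth c hc0 hcfin hcsum hweak hfy v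
  have hne : ‖ContinuousLinearMap.id ℝ X - g.smulRight y‖ ≠ 0 := fun h => by
    simpa [id_sub_smulRight_eq_zero_of_apply_eq_one (hpair 0) (norm_eq_zero.1 h)] using hFlinn 0
  exact le_antisymm hle
    ((ContinuousLinearMap.isIdempotentElem_smulRight hgy).one_sub.one_le_norm hne)

/-- Lemma 2.4 (last part): under the same approximation hypotheses, if each `(x_n, f_n)` is a
Flinn pair then `(y, g)` is a Flinn pair, i.e. `‖I - g ⊗ y‖ = 1`. -/
theorem stmt15 {X : Type*} [NormedAddCommGroup X] [NormedSpace ℝ X] [CompleteSpace X]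
    (xs : ℕ → X) (fs : ℕ → StrongDual ℝ X)
    (hxs : ∀ n, ‖xs n‖ = 1) (hfs : ∀ n, ‖fs n‖ = 1) (hpair : ∀ n, fs n (xs n) = 1)
    (hFlinn : ∀ n, ‖ContinuousLinearMap.id ℝ X - (fs n).smulRight (xs n)‖ = 1)
    (y : X) (g : StrongDual ℝ X) (hy : ‖y‖ = 1) (hg : ‖g‖ = 1) (hgy : g y = 1)
    (hsmooth : ∀ h : StrongDual ℝ X, ‖h‖ = 1 → h y = 1 → h = g)
    (c : ℕ → ℕ → ℝ) (hc0 : ∀ k n, 0 ≤ c k n)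
    (hcfin : ∀ k, (Function.support (c k)).Finite) (hcsum : ∀ k, ∑ᶠ n, c k n = 1)
    (hweak : ∀ φ : StrongDual ℝ X,
      Tendsto (fun k => φ (∑ᶠ n, c k n • xs n)) atTop (𝓝 (φ y)))
    (hfy : Tendsto (fun k => ∑ᶠ n, c k n * fs n y) atTop (𝓝 1)) :
    ‖ContinuousLinearMap.id ℝ X - g.smulRight y‖ = 1 :=
  stmt15_general xs fs hxs hfs hpair hFlinn y g hy hgy hsmooth c hc0 hcfin hcsum hweak hfy
end

section
/- Let X be a real Banach space that is convex-transitive with respect to a subgroup G⁰ of its isometry group, let C ⊆ S_X be norm-dense in S_X, and let A ⊆ X be a closed subspace of infinite density character κ. Then there exists a closed subspace Y ⊆ X with A ⊆ Y, dens(Y) = κ, such that Y is convex-transitive with respect to the subgroup {T|_Y : T ∈ G⁰, T(Y) = Y} of isometries of Y, and C ∩ S_Y is dense in S_Y. -/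
/-!
A Löwenheim–Skolem argument. Start from a dense subset of `A` of cardinality `κ` and close it
under rational linear combinations, normalisation `x ↦ x / ‖x‖`, the radial retraction onto the
unit ball, a sequence of points of `C` converging to each unit vector, and, for every pair
`(u, v)`, a countable set of isometries in `G⁰` (and their inverses) whose convex combinations
of images of `u` approximate `v`. The closure `Y` of the resulting set `D` is a subspace of
density character `κ`, invariant under all those isometries, so every `v` in the ball of `Y`
lies in the closed convex hull of the induced orbit of any unit `u ∈ D`. Since isometries move
convex hulls by at most the distance between base points, this passes from the unit vectors
of `D` to every unit vector of `Y`.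
-/

open Filter Topology

/-- The density character of a topological space: the least cardinality of a dense subset. -/
noncomputable def densChar (α : Type*) [TopologicalSpace α] : Cardinal :=
  sInf {c : Cardinal | ∃ s : Set α, Dense s ∧ Cardinal.mk s = c}

open Set Metric Cardinal
open scoped Pointwise

universe u

section DensityCharacter

variable {α : Type u} [TopologicalSpace α]

theorem densChar_le_mk_of_dense {d : Set α} (hd : Dense d) : densChar α ≤ #d :=
  csInf_le' ⟨d, hd, rfl⟩

variable (α) in
theorem exists_dense_mk_eq_densChar :
    ∃ d : Set α, Dense d ∧ #d = densChar α :=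
  csInf_mem (s := {c | ∃ d : Set α, Dense d ∧ #d = c}) ⟨_, univ, dense_univ, rfl⟩

theorem densChar_le_mk_of_subset_closure {s t : Set α} (hts : t ⊆ s) (hst : s ⊆ closure t) :
    densChar s ≤ #t := by
  have hdense : Dense ((↑) ⁻¹' t : Set s) := by
    rw [IsInducing.subtypeVal.dense_iff]
    intro x
    rw [image_preimage_eq_of_subset (by rwa [Subtype.range_coe])]
    exact hst x.2
  exact (densChar_le_mk_of_dense hdense).trans (mk_preimage_of_injective _ _ Subtype.val_injective)

theorem exists_subset_closure_mk_eq_densChar (s : Set α) :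
    ∃ t ⊆ s, s ⊆ closure t ∧ #t = densChar s := by
  obtain ⟨d, hd, hdmk⟩ := exists_dense_mk_eq_densChar s
  refine ⟨(↑) '' d, Subtype.coe_image_subset s d, fun x hx => ?_, ?_⟩
  · exact IsInducing.subtypeVal.dense_iff.1 hd ⟨x, hx⟩
  · rw [mk_image_eq Subtype.val_injective, hdmk]

theorem aleph0_le_densChar [T1Space α] [Infinite α] : ℵ₀ ≤ densChar α := by
  obtain ⟨d, hd, hdmk⟩ := exists_dense_mk_eq_densChar α
  rw [← hdmk, ← not_lt, lt_aleph0_iff_set_finite]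
  intro hfin
  exact infinite_univ (hfin.subset (by rw [← hfin.isClosed.closure_eq, hd.closure_eq]))

end DensityCharacter

theorem densChar_le_max_of_subset {α : Type u} [PseudoMetricSpace α] {s t : Set α} (hst : s ⊆ t) :
    densChar s ≤ max ℵ₀ (densChar t) := by
  obtain ⟨d, hdt, htd, hdmk⟩ := exists_subset_closure_mk_eq_densChar t
  have hchoice : ∀ (p : α) (n : ℕ), ∃ q, (∃ q' ∈ s, dist p q' < 1 / (n + 1)) →
      q ∈ s ∧ dist p q < 1 / (n + 1) := fun p n => by
    by_cases h : ∃ q' ∈ s, dist p q' < 1 / (n + 1)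
    · obtain ⟨q, hq⟩ := h
      exact ⟨q, fun _ => hq⟩
    · exact ⟨p, fun h' => absurd h' h⟩
  choose f hf using hchoice
  set e := s ∩ range (fun pn : d × ℕ => f pn.1 pn.2)
  have hse : s ⊆ closure e := by
    refine fun x hx => Metric.mem_closure_iff.2 fun ε hε => ?_
    obtain ⟨n, hn⟩ := exists_nat_one_div_lt (half_pos hε)
    obtain ⟨p, hpd, hxp⟩ :=
      Metric.mem_closure_iff.1 (htd (hst hx)) _ (Nat.one_div_pos_of_nat (n := n))
    obtain ⟨hfs, hfd⟩ := hf p n ⟨x, hx, by rwa [dist_comm]⟩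
    refine ⟨f p n, ⟨hfs, ⟨(⟨p, hpd⟩, n), rfl⟩⟩, ?_⟩
    calc dist x (f p n) ≤ dist x p + dist p (f p n) := dist_triangle _ _ _
      _ < ε := by linarith
  calc densChar s ≤ #e := densChar_le_mk_of_subset_closure inter_subset_left hse
    _ ≤ #(d × ℕ) := (mk_le_mk_of_subset inter_subset_right).trans mk_range_le
    _ ≤ max ℵ₀ (densChar t) := by
      rw [mk_prod, lift_uzero, mk_nat, lift_aleph0, ← hdmk, max_comm]
      exact mul_le_max_of_aleph0_le_right le_rfl

theorem densChar_le_densChar_of_subset {α : Type u} [MetricSpace α] {s t : Set α} (hst : s ⊆ t)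
    (hs : ℵ₀ ≤ densChar s) : densChar s ≤ densChar t := by
  have : Infinite t := infinite_iff.2 <| hs.trans <|
    (densChar_le_mk_of_dense dense_univ).trans <| by
      rw [mk_univ]; exact mk_le_mk_of_subset hst
  exact (densChar_le_max_of_subset hst).trans (max_le aleph0_le_densChar le_rfl)

theorem mk_finset_le_max (α : Type u) : #(Finset α) ≤ max ℵ₀ #α := by
  classical
  have hsurj : Function.Surjective (List.toFinset : List α → Finset α) :=
    fun F => ⟨F.toList, F.toList_toFinset⟩
  exact (mk_le_of_surjective hsurj).trans (mk_list_le_max α)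

section FinitaryClosure

variable {α : Type u} (g : Finset α → Set α)

def finitaryStep (s : Set α) : Set α := s ∪ ⋃ F : {F : Finset α // ↑F ⊆ s}, g F

theorem mk_finitaryStep_le {κ : Cardinal.{u}} (hκ : ℵ₀ ≤ κ) (hg : ∀ F, (g F).Countable)
    {s : Set α} (hs : #s ≤ κ) : #(finitaryStep g s) ≤ κ := by
  have hidx : #{F : Finset α // ↑F ⊆ s} ≤ κ := by
    have hsurj : Function.Surjective
        (fun F : Finset s => (⟨F.map (Function.Embedding.subtype _), by simp⟩ :
          {F : Finset α // ↑F ⊆ s})) := by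
      classical
      exact fun F =>
        ⟨F.1.subtype (· ∈ s), Subtype.ext (Finset.subtype_map_of_mem fun x hx => F.2 hx)⟩
    exact (mk_le_of_surjective hsurj).trans ((mk_finset_le_max s).trans (max_le hκ hs))
  refine (mk_union_le _ _).trans (add_le_of_le hκ hs ((mk_iUnion_le _).trans ?_))
  exact mul_le_of_le hκ hidx (ciSup_le' fun F => (mk_le_aleph0_iff.2 (hg F).to_subtype).trans hκ)

theorem exists_superset_mk_le_finitaryClosed {κ : Cardinal.{u}} (hκ : ℵ₀ ≤ κ)
    (hg : ∀ F, (g F).Countable) {s : Set α} (hs : #s ≤ κ) :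
    ∃ t, s ⊆ t ∧ #t ≤ κ ∧ ∀ F : Finset α, ↑F ⊆ t → g F ⊆ t := by
  set S : ℕ → Set α := fun n => (finitaryStep g)^[n] s
  have hS_succ (n : ℕ) : S (n + 1) = finitaryStep g (S n) := Function.iterate_succ_apply' _ _ _
  have hS_mono : Monotone S :=
    monotone_nat_of_le_succ fun n => (hS_succ n).symm ▸ subset_union_left
  refine ⟨⋃ n, S n, subset_iUnion S 0, ?_, fun F hF => ?_⟩
  · have hSκ (n : ℕ) : #(S n) ≤ κ := by
      induction n with
      | zero => exact hs
      | succ n ih => rw [hS_succ]; exact mk_finitaryStep_le g hκ hg ih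
    have := mk_iUnion_le_lift S
    simp only [lift_uzero, mk_nat, lift_aleph0] at this
    exact this.trans (mul_le_of_le hκ hκ (ciSup_le' hSκ))
  · obtain ⟨n, hn⟩ := hS_mono.directed_le.exists_mem_subset_of_finset_subset_biUnion hF
    have hFn : g F ⊆ S (n + 1) := by
      rw [hS_succ]
      exact subset_union_of_subset_right
        (subset_iUnion (fun F' : {F' : Finset α // ↑F' ⊆ S n} => g F') ⟨F, hn⟩) _
    exact hFn.trans (subset_iUnion S (n + 1))

end FinitaryClosure

section Closure

variable {E : Type*} [NormedAddCommGroup E] [NormedSpace ℝ E]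

theorem coe_topologicalClosure_span_eq_closure {s : Set E} (hne : s.Nonempty)
    (hadd : ∀ x ∈ s, ∀ y ∈ s, x + y ∈ s) (hsmul : ∀ q : ℚ, ∀ x ∈ s, (q : ℝ) • x ∈ s) :
    ((Submodule.span ℝ s).topologicalClosure : Set E) = closure s := by
  have hspan : (Submodule.span ℝ s : Set E) ⊆ closure s := by
    intro x hx
    induction hx using Submodule.span_induction with
    | mem x hx => exact subset_closure hx
    | zero =>
      obtain ⟨x, hx⟩ := hne
      simpa using subset_closure (hsmul 0 x hx)
    | add x y _ _ hx hy => exact map_mem_closure₂ continuous_add hx hy hadd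
    | smul r x _ hx =>
      refine map_mem_closure₂ continuous_smul (Rat.denseRange_cast r) hx ?_
      rintro _ ⟨q, rfl⟩ y hy
      exact hsmul q y hy
  rw [Submodule.topologicalClosure_coe]
  exact (closure_minimal hspan isClosed_closure).antisymm (closure_mono Submodule.subset_span)

theorem mem_closure_inter_sphere {s : Set E} (hs : ∀ x ∈ s, ‖x‖⁻¹ • x ∈ s) {y : E}
    (hy : y ∈ closure s) (hy1 : ‖y‖ = 1) : y ∈ closure (s ∩ sphere 0 1) := by
  have hy0 : y ≠ 0 := norm_ne_zero_iff.1 (by simp [hy1])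
  have hcont : ContinuousAt (fun x : E => ‖x‖⁻¹ • x) y :=
    (continuous_norm.continuousAt.inv₀ (norm_ne_zero_iff.2 hy0)).smul continuousAt_id
  have := mem_closure_image hcont (isOpen_compl_singleton.inter_closure ⟨hy0, hy⟩)
  simp only [hy1, inv_one, one_smul] at this
  refine closure_mono ?_ this
  rintro _ ⟨x, ⟨hx0, hx⟩, rfl⟩
  exact ⟨hs x hx, by simpa using norm_smul_inv_norm (𝕜 := ℝ) hx0⟩

theorem mem_closure_inter_closedBall {s : Set E} (hs : ∀ x ∈ s, (max 1 ‖x‖)⁻¹ • x ∈ s) {y : E}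
    (hy : y ∈ closure s) (hy1 : ‖y‖ ≤ 1) : y ∈ closure (s ∩ closedBall 0 1) := by
  have hcont : Continuous (fun x : E => (max 1 ‖x‖)⁻¹ • x) :=
    ((continuous_const.max continuous_norm).inv₀ fun x => by positivity).smul continuous_id
  have := mem_closure_image hcont.continuousAt hy
  simp only [max_eq_left hy1, inv_one, one_smul] at this
  refine closure_mono ?_ this
  rintro _ ⟨x, hx, rfl⟩
  refine ⟨hs x hx, ?_⟩
  rw [mem_closedBall_zero_iff, norm_smul, norm_inv, Real.norm_of_nonneg (by positivity)]
  exact inv_mul_le_one_of_le₀ (le_max_right _ _) (by positivity)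

end Closure

theorem Homeomorph.image_closure_eq_of_mapsTo {α : Type*} [TopologicalSpace α] (e : α ≃ₜ α)
    {s : Set α} (he : MapsTo e s s) (he' : MapsTo e.symm s s) : e '' closure s = closure s := by
  rw [e.image_closure]
  refine congrArg closure (he.image_subset.antisymm fun x hx => ⟨e.symm x, he' hx, by simp⟩)

section Orbit

variable {E : Type*} [NormedAddCommGroup E] [NormedSpace ℝ E]

theorem exists_mem_convexHull_orbit_dist_le (H : Set (E ≃ₗᵢ[ℝ] E)) (x y : E) {w : E}
    (hw : w ∈ convexHull ℝ ((fun T => T x) '' H)) :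
    ∃ w' ∈ convexHull ℝ ((fun T => T y) '' H), dist w w' ≤ dist x y := by
  have hsub : convexHull ℝ ((fun T => T x) '' H) ⊆
      convexHull ℝ ((fun T => T y) '' H) + closedBall (0 : E) (dist x y) := by
    refine convexHull_min ?_ ((convex_convexHull ℝ _).add (convex_closedBall 0 _))
    rintro _ ⟨T, hT, rfl⟩
    refine ⟨T y, subset_convexHull ℝ _ ⟨T, hT, rfl⟩, T (x - y), ?_, by simp⟩
    rw [mem_closedBall_zero_iff, LinearIsometryEquiv.norm_map, dist_eq_norm]
  obtain ⟨w', hw', b, hb, rfl⟩ := hsub hw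
  exact ⟨w', hw', by simpa [dist_eq_norm] using hb⟩

theorem Submodule.closure_convexHull_orbit_eq_closedBall (Y : Submodule ℝ E)
    (G : Set (E ≃ₗᵢ[ℝ] E)) {y : Y} (hy : ‖y‖ = 1)
    (h : ∀ z ∈ Y, ‖z‖ ≤ 1 → z ∈ closure (convexHull ℝ ((fun T => T y) '' {T ∈ G | T '' Y = Y}))) :
    closure (convexHull ℝ {z : Y | ∃ T ∈ G, T '' Y = Y ∧ (z : E) = T y}) = closedBall 0 1 := by
  have himage : (↑) '' {z : Y | ∃ T ∈ G, T '' Y = Y ∧ (z : E) = T y} =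
      (fun T => T y) '' {T ∈ G | T '' Y = Y} := by
    ext x
    constructor
    · rintro ⟨z, ⟨T, hT, hTY, hz⟩, rfl⟩
      exact ⟨T, ⟨hT, hTY⟩, hz.symm⟩
    · rintro ⟨T, ⟨hT, hTY⟩, rfl⟩
      have hTy : T y ∈ Y := by rw [← SetLike.mem_coe, ← hTY]; exact mem_image_of_mem T y.2
      exact ⟨⟨T y, hTy⟩, ⟨T, hT, hTY, rfl⟩, rfl⟩
  have hball : closure (convexHull ℝ ((fun T => T y) '' {T ∈ G | T '' Y = Y})) ⊆
      closedBall 0 1 := by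
    refine closure_minimal (convexHull_min ?_ (convex_closedBall 0 1)) isClosed_closedBall
    rintro _ ⟨T, -, rfl⟩
    simpa using hy.le
  have hconv (S : Set Y) : ((↑) : Y → E) '' convexHull ℝ S = convexHull ℝ ((↑) '' S) :=
    Y.subtype.image_convexHull S
  ext z
  rw [IsEmbedding.subtypeVal.closure_eq_preimage_closure_image, hconv _, himage,
    mem_preimage, mem_closedBall_zero_iff]
  exact ⟨fun hz => by simpa using hball hz, fun hz => h z z.2 hz⟩

theorem exists_countable_subset_mem_closure_convexHull_image {ι : Type*} {f : ι → E}
    {s : Set ι} {v : E} (hv : v ∈ closure (convexHull ℝ (f '' s))) :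
    ∃ t ⊆ s, t.Countable ∧ v ∈ closure (convexHull ℝ (f '' t)) := by
  classical
  obtain ⟨w, hw, hwv⟩ := mem_closure_iff_seq_limit.1 hv
  have hfinite (n : ℕ) : ∃ t : Finset ι, ↑t ⊆ s ∧ w n ∈ convexHull ℝ (f '' t) := by
    have := hw n
    rw [convexHull_eq_union_convexHull_finite_subsets] at this
    obtain ⟨F, hF, hwF⟩ := mem_iUnion₂.1 this
    obtain ⟨t, hts, rfl⟩ := Finset.subset_set_image_iff.1 hF
    exact ⟨t, hts, by rwa [Finset.coe_image] at hwF⟩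
  choose t hts hwt using hfinite
  refine ⟨⋃ n, t n, iUnion_subset hts, countable_iUnion fun n => (t n).countable_toSet, ?_⟩
  refine mem_closure_of_tendsto hwv (Eventually.of_forall fun n => ?_)
  exact convexHull_mono (image_mono (subset_iUnion (fun n => (t n : Set ι)) n)) (hwt n)

theorem exists_countable_orbit_approximation (G : Set (E ≃ₗᵢ[ℝ] E))
    (hG : ∀ x : E, ‖x‖ = 1 →
      closure (convexHull ℝ {y : E | ∃ T ∈ G, y = T x}) = closedBall (0 : E) 1) :
    ∃ H : E → E → Set (E ≃ₗᵢ[ℝ] E), (∀ u v, H u v ⊆ G) ∧ (∀ u v, (H u v).Countable) ∧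
      ∀ u ∈ sphere (0 : E) 1, ∀ v ∈ closedBall (0 : E) 1,
        v ∈ closure (convexHull ℝ ((fun T => T u) '' H u v)) := by
  have (u v : E) : ∃ t ⊆ G, t.Countable ∧ (u ∈ sphere 0 1 → v ∈ closedBall 0 1 →
      v ∈ closure (convexHull ℝ ((fun T => T u) '' t))) := by
    by_cases huv : u ∈ sphere 0 1 ∧ v ∈ closedBall 0 1
    · have horbit : {y : E | ∃ T ∈ G, y = T u} = (fun T => T u) '' G := by
        ext; simp [eq_comm]
      have hv : v ∈ closure (convexHull ℝ ((fun T => T u) '' G)) := by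
        rw [← horbit, hG u (by simpa using huv.1)]
        exact huv.2
      obtain ⟨t, hts, htc, ht⟩ := exists_countable_subset_mem_closure_convexHull_image hv
      exact ⟨t, hts, htc, fun _ _ => ht⟩
    · exact ⟨∅, empty_subset _, countable_empty, fun hu hv => absurd ⟨hu, hv⟩ huv⟩
  choose H hHG hHc hH using this
  exact ⟨H, hHG, hHc, fun u hu v hv => hH u v hu hv⟩

end Orbit

section SkolemClosure

variable {X : Type*} [NormedAddCommGroup X] [NormedSpace ℝ X]

/-- `H u v` is meant to be a countable set of isometries whose orbit of `u` has `v` in its closed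
convex hull, and `c x` a sequence in `C` converging to `x`. -/
structure IsSkolemClosed (D : Set X) (H : X → X → Set (X ≃ₗᵢ[ℝ] X)) (c : X → ℕ → X) : Prop where
  add_mem : ∀ x ∈ D, ∀ y ∈ D, x + y ∈ D
  ratCast_smul_mem : ∀ q : ℚ, ∀ x ∈ D, (q : ℝ) • x ∈ D
  inv_norm_smul_mem : ∀ x ∈ D, ‖x‖⁻¹ • x ∈ D
  inv_max_norm_smul_mem : ∀ x ∈ D, (max 1 ‖x‖)⁻¹ • x ∈ D
  seq_mem : ∀ x ∈ D, ∀ m, c x m ∈ D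
  isometry_mem : ∀ u ∈ D, ∀ v ∈ D, ∀ T ∈ H u v, ∀ w ∈ D, T w ∈ D ∧ T.symm w ∈ D

theorem exists_superset_isSkolemClosed {X : Type u} [NormedAddCommGroup X] [NormedSpace ℝ X]
    {κ : Cardinal.{u}} (hκ : ℵ₀ ≤ κ) (H : X → X → Set (X ≃ₗᵢ[ℝ] X))
    (hH : ∀ u v, (H u v).Countable) (c : X → ℕ → X) {s : Set X} (hs : #s ≤ κ) :
    ∃ D, s ⊆ D ∧ #D ≤ κ ∧ IsSkolemClosed D H c := by
  classical
  let g : Finset X → Set X := fun F =>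
    image2 (· + ·) F F ∪ image2 (fun (q : ℚ) x => (q : ℝ) • x) univ F ∪
      (fun x => ‖x‖⁻¹ • x) '' F ∪ (fun x => (max 1 ‖x‖)⁻¹ • x) '' F ∪ image2 c F univ ∪
      ⋃ u ∈ F, ⋃ v ∈ F, ⋃ T ∈ H u v, (T '' F ∪ T.symm '' F)
  have hg (F : Finset X) : (g F).Countable := by
    have hF := F.countable_toSet
    refine (((((hF.image2 hF _).union (countable_univ.image2 hF _)).union (hF.image _)).union
      (hF.image _)).union (hF.image2 countable_univ _)).union ?_
    exact hF.biUnion fun u _ => hF.biUnion fun v _ => (hH u v).biUnion fun T _ =>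
      (hF.image _).union (hF.image _)
  obtain ⟨D, hsD, hDκ, hD⟩ := exists_superset_mk_le_finitaryClosed g hκ hg hs
  have hD' (F : Finset X) (hF : ↑F ⊆ D) :
      image2 (· + ·) F F ⊆ D ∧ image2 (fun (q : ℚ) x => (q : ℝ) • x) univ F ⊆ D ∧
      (fun x => ‖x‖⁻¹ • x) '' F ⊆ D ∧ (fun x => (max 1 ‖x‖)⁻¹ • x) '' F ⊆ D ∧
      image2 c F univ ⊆ D ∧ ∀ u ∈ F, ∀ v ∈ F, ∀ T ∈ H u v, T '' F ⊆ D ∧ T.symm '' F ⊆ D := by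
    simpa only [g, union_subset_iff, iUnion_subset_iff, and_assoc] using hD F hF
  refine ⟨D, hsD, hDκ, ⟨fun x hx y hy => ?_, fun q x hx => ?_, fun x hx => ?_, fun x hx => ?_,
    fun x hx m => ?_, fun u hu v hv T hT w hw => ?_⟩⟩
  · exact (hD' {x, y} (by simp [insert_subset_iff, hx, hy])).1
      (mem_image2_of_mem (by simp) (by simp))
  · exact (hD' {x} (by simpa using hx)).2.1 (mem_image2_of_mem (mem_univ q) (by simp))
  · exact (hD' {x} (by simpa using hx)).2.2.1 (mem_image_of_mem _ (by simp))
  · exact (hD' {x} (by simpa using hx)).2.2.2.1 (mem_image_of_mem _ (by simp))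
  · exact (hD' {x} (by simpa using hx)).2.2.2.2.1 (mem_image2_of_mem (by simp) (mem_univ m))
  · have hT' := (hD' {u, v, w} (by simp [insert_subset_iff, hu, hv, hw])).2.2.2.2.2
      u (by simp) v (by simp) T hT
    exact ⟨hT'.1 (mem_image_of_mem _ (by simp)), hT'.2 (mem_image_of_mem _ (by simp))⟩

theorem exists_seq_tendsto_of_subset_closure {α : Type*} [TopologicalSpace α]
    [FrechetUrysohnSpace α] {s C : Set α} (h : s ⊆ closure C) :
    ∃ c : α → ℕ → α, ∀ x ∈ s, (∀ m, c x m ∈ C) ∧ Tendsto (c x) atTop (𝓝 x) := by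
  have (x : α) : ∃ c : ℕ → α, x ∈ s → (∀ m, c m ∈ C) ∧ Tendsto c atTop (𝓝 x) := by
    by_cases hx : x ∈ s
    · obtain ⟨c, hcC, hc⟩ := mem_closure_iff_seq_limit.1 (h hx)
      exact ⟨c, fun _ => ⟨hcC, hc⟩⟩
    · exact ⟨fun _ => x, fun h' => absurd h' hx⟩
  choose c hc using this
  exact ⟨c, hc⟩

namespace IsSkolemClosed

variable {D : Set X} {H : X → X → Set (X ≃ₗᵢ[ℝ] X)} {c : X → ℕ → X}

theorem image_closure_eq (hD : IsSkolemClosed D H c) {u v : X} (hu : u ∈ D) (hv : v ∈ D)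
    {T : X ≃ₗᵢ[ℝ] X} (hT : T ∈ H u v) : T '' closure D = closure D := by
  simpa using T.toHomeomorph.image_closure_eq_of_mapsTo
    (fun w hw => (hD.isometry_mem u hu v hv T hT w hw).1)
    (fun w hw => (hD.isometry_mem u hu v hv T hT w hw).2)

theorem mem_closure_convexHull_orbit (hD : IsSkolemClosed D H c) {G : Set (X ≃ₗᵢ[ℝ] X)}
    (hHG : ∀ u v, H u v ⊆ G)
    (hH : ∀ u ∈ sphere (0 : X) 1, ∀ v ∈ closedBall (0 : X) 1,
      v ∈ closure (convexHull ℝ ((fun T => T u) '' H u v)))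
    {y z : X} (hy : y ∈ closure D) (hy1 : ‖y‖ = 1) (hz : z ∈ closure D) (hz1 : ‖z‖ ≤ 1) :
    z ∈ closure (convexHull ℝ ((fun T => T y) '' {T ∈ G | T '' closure D = closure D})) := by
  set G' := {T ∈ G | T '' closure D = closure D}
  have hu : ∀ u ∈ D ∩ sphere 0 1, z ∈ closure (convexHull ℝ ((fun T => T u) '' G')) := by
    rintro u ⟨huD, hu1⟩
    have hball : D ∩ closedBall 0 1 ⊆ closure (convexHull ℝ ((fun T => T u) '' G')) := by
      rintro v ⟨hvD, hv1⟩
      refine closure_mono (convexHull_mono (image_mono fun T hT => ?_)) (hH u hu1 v hv1)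
      exact ⟨hHG u v hT, hD.image_closure_eq huD hvD hT⟩
    exact closure_minimal hball isClosed_closure
      (mem_closure_inter_closedBall hD.inv_max_norm_smul_mem hz hz1)
  refine Metric.mem_closure_iff.2 fun ε hε => ?_
  obtain ⟨u, hu', hyu⟩ := Metric.mem_closure_iff.1
    (mem_closure_inter_sphere hD.inv_norm_smul_mem hy hy1) (ε / 2) (half_pos hε)
  obtain ⟨w, hw, hzw⟩ := Metric.mem_closure_iff.1 (hu u hu') (ε / 2) (half_pos hε)
  obtain ⟨w', hw', hww'⟩ := exists_mem_convexHull_orbit_dist_le G' u y hw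
  refine ⟨w', hw', ?_⟩
  calc dist z w' ≤ dist z w + dist w w' := dist_triangle _ _ _
    _ < ε := by rw [dist_comm u y] at hww'; linarith

theorem mem_closure_inter (hD : IsSkolemClosed D H c) {C : Set X}
    (hc : ∀ x ∈ sphere (0 : X) 1, (∀ m, c x m ∈ C) ∧ Tendsto (c x) atTop (𝓝 x))
    {y : X} (hy : y ∈ closure D) (hy1 : ‖y‖ = 1) : y ∈ closure (C ∩ closure D) := by
  have hsphere : D ∩ sphere 0 1 ⊆ closure (C ∩ D) := fun x ⟨hxD, hx1⟩ =>
    mem_closure_of_tendsto (hc x hx1).2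
      (Eventually.of_forall fun m => ⟨(hc x hx1).1 m, hD.seq_mem x hxD m⟩)
  refine closure_mono (inter_subset_inter_right C subset_closure) ?_
  exact closure_minimal hsphere isClosed_closure
    (mem_closure_inter_sphere hD.inv_norm_smul_mem hy hy1)

end IsSkolemClosed

end SkolemClosure

theorem stmt18_general {X : Type*} [NormedAddCommGroup X] [NormedSpace ℝ X]
    (G0 : Subgroup (X ≃ₗᵢ[ℝ] X))
    (hct : ∀ x : X, ‖x‖ = 1 →
      closure (convexHull ℝ {y : X | ∃ T ∈ G0, y = T x}) = Metric.closedBall (0 : X) 1)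
    (C : Set X)
    (hCdense : ∀ x : X, ‖x‖ = 1 → x ∈ closure C)
    (A : Submodule ℝ X)
    (κ : Cardinal) (hκ : Cardinal.aleph0 ≤ κ) (hdensA : densChar A = κ) :
    ∃ Y : Submodule ℝ X, IsClosed (Y : Set X) ∧ A ≤ Y ∧ densChar Y = κ ∧
      (∀ y : Y, ‖y‖ = 1 →
        closure (convexHull ℝ
          {z : Y | ∃ T ∈ G0, (T : X ≃ₗᵢ[ℝ] X) '' (Y : Set X) = (Y : Set X) ∧
            (z : X) = T (y : X)}) = Metric.closedBall (0 : Y) 1) ∧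
      ∀ y : X, y ∈ Y → ‖y‖ = 1 → y ∈ closure (C ∩ (Y : Set X)) := by
  obtain ⟨D₀, -, hAD₀, hD₀κ⟩ := exists_subset_closure_mk_eq_densChar (A : Set X)
  obtain ⟨H, hHG, hHc, hH⟩ := exists_countable_orbit_approximation (G0 : Set (X ≃ₗᵢ[ℝ] X)) hct
  obtain ⟨c, hc⟩ := exists_seq_tendsto_of_subset_closure (s := sphere (0 : X) 1)
    fun x hx => hCdense x (by simpa using hx)
  obtain ⟨D, hD₀D, hDκ, hD⟩ := exists_superset_isSkolemClosed hκ H hHc c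
    (hD₀κ.trans hdensA).le
  have hDne : D.Nonempty :=
    (closure_nonempty_iff.1 ⟨0, hAD₀ A.zero_mem⟩).mono hD₀D
  set Y := (Submodule.span ℝ D).topologicalClosure
  have hY : (Y : Set X) = closure D :=
    coe_topologicalClosure_span_eq_closure hDne hD.add_mem hD.ratCast_smul_mem
  have hAY : A ≤ Y := fun x hx => by
    rw [← SetLike.mem_coe, hY]
    exact closure_mono hD₀D (hAD₀ hx)
  have hYκ : densChar Y ≤ κ :=
    (densChar_le_mk_of_subset_closure (hY ▸ subset_closure) hY.le).trans hDκ
  have hκY : κ ≤ densChar Y :=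
    hdensA ▸ densChar_le_densChar_of_subset (s := (A : Set X)) hAY (hdensA ▸ hκ)
  refine ⟨Y, Submodule.isClosed_topologicalClosure _, hAY, hYκ.antisymm hκY, fun y hy => ?_,
    fun y hyY hy1 => ?_⟩
  · refine Y.closure_convexHull_orbit_eq_closedBall _ hy fun z hz hz1 => ?_
    rw [← SetLike.mem_coe, hY] at hz
    have hy' : (y : X) ∈ closure D := hY ▸ y.2
    rw [hY]
    exact hD.mem_closure_convexHull_orbit hHG hH hy' hy hz hz1
  · rw [← SetLike.mem_coe, hY] at hyY
    rw [hY]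
    exact hD.mem_closure_inter hc hyY hy1

/-- Theorem 2.5: in a space `X` convex-transitive with respect to a subgroup `G⁰` of its
isometry group, with `C` norm-dense in the unit sphere, every closed subspace `A` of infinite
density character `κ` is contained in a closed subspace `Y` of density character `κ` which is
convex-transitive with respect to the induced subgroup and in which `C ∩ S_Y` is dense. -/
theorem stmt18 {X : Type*} [NormedAddCommGroup X] [NormedSpace ℝ X] [CompleteSpace X]
    (G0 : Subgroup (X ≃ₗᵢ[ℝ] X))
    (hct : ∀ x : X, ‖x‖ = 1 →
      closure (convexHull ℝ {y : X | ∃ T ∈ G0, y = T x}) = Metric.closedBall (0 : X) 1)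
    (C : Set X) (hC1 : ∀ x ∈ C, ‖x‖ = 1)
    (hCdense : ∀ x : X, ‖x‖ = 1 → x ∈ closure C)
    (A : Submodule ℝ X) (hA : IsClosed (A : Set X))
    (κ : Cardinal) (hκ : Cardinal.aleph0 ≤ κ) (hdensA : densChar A = κ) :
    ∃ Y : Submodule ℝ X, IsClosed (Y : Set X) ∧ A ≤ Y ∧ densChar Y = κ ∧
      (∀ y : Y, ‖y‖ = 1 →
        closure (convexHull ℝ
          {z : Y | ∃ T ∈ G0, (T : X ≃ₗᵢ[ℝ] X) '' (Y : Set X) = (Y : Set X) ∧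
            (z : X) = T (y : X)}) = Metric.closedBall (0 : Y) 1) ∧
      ∀ y : X, y ∈ Y → ‖y‖ = 1 → y ∈ closure (C ∩ (Y : Set X)) :=
  stmt18_general G0 hct C hCdense A κ hκ hdensA
end

section
/- Let X be a σ-complete Banach lattice that is convex-transitive and such that every surjective linear isometry of X is disjointness-preserving. If X contains an atom x ∈ S_X, then X is one-dimensional. -/
/-!
Write `a = |x|`. Every `z` splits uniquely as `z = t • a + r` with `|r| ⊓ a = 0`: `t` is the
largest real with `t • a ≤ z⁺` minus the largest with `t • a ≤ z⁻`, and the atom property forces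
the remainders to be disjoint from `a`. The coefficient `t` is a continuous linear functional
of `z`.

A disjointness-preserving surjective isometry `T` maps `a` to an element whose modulus is again a
normalized atom, so `|T a|` is either `a` or disjoint from `a`. Hence the seminorm
`w ↦ |coeff w| + ‖w - coeff w • a‖` is at most `1` on the orbit of `a`, and by convex transitivity
at most `‖w‖` everywhere; for `r` disjoint from `a` this gives `1 + ‖r‖ ≤ ‖a + r‖`. On the orbit of
`a + r` at most one of `T a`, `T r` has a nonzero coefficient, so the same argument with
`w ↦ |coeff w|` gives `‖a + r‖ ≤ max 1 ‖r‖`. Therefore `r = 0` and `a` spans `X`.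
-/

section LatticeOrderedGroup

variable {α : Type*} [Lattice α] [AddCommGroup α] {u v w : α}

lemma inf_eq_zero_of_le (hu : 0 ≤ u) (hw : 0 ≤ w) (huv : u ≤ v) (hv : v ⊓ w = 0) :
    u ⊓ w = 0 :=
  le_antisymm ((inf_le_inf_right w huv).trans hv.le) (le_inf hu hw)

variable [IsOrderedAddMonoid α]

lemma add_inf_le_inf_add_inf (hu : 0 ≤ u) (hv : 0 ≤ v) (hw : 0 ≤ w) :
    (u + v) ⊓ w ≤ u ⊓ w + v ⊓ w := by
  rw [← sub_le_iff_le_add', sub_inf]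
  refine sup_le (le_inf ?_ ?_) ((sub_nonpos.2 inf_le_right).trans (le_inf hv hw))
  · rw [sub_le_iff_le_add']
    exact inf_le_left
  · rw [sub_le_iff_le_add]
    exact inf_le_right.trans (le_add_of_nonneg_right hu)

lemma add_inf_eq_zero (hu : 0 ≤ u) (hv : 0 ≤ v) (hw : 0 ≤ w) (huw : u ⊓ w = 0)
    (hvw : v ⊓ w = 0) : (u + v) ⊓ w = 0 :=
  le_antisymm ((add_inf_le_inf_add_inf hu hv hw).trans (by rw [huw, hvw, add_zero]))
    (le_inf (add_nonneg hu hv) hw)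

lemma nsmul_inf_eq_zero (hu : 0 ≤ u) (hw : 0 ≤ w) (h : u ⊓ w = 0) (n : ℕ) :
    (n • u) ⊓ w = 0 := by
  induction n with
  | zero => rw [zero_nsmul, inf_eq_left.2 hw]
  | succ n ih => rw [succ_nsmul]; exact add_inf_eq_zero (nsmul_nonneg hu n) hu hw ih h

lemma abs_add_inf_eq_zero (hw : 0 ≤ w) (hu : |u| ⊓ w = 0) (hv : |v| ⊓ w = 0) :
    |u + v| ⊓ w = 0 :=
  inf_eq_zero_of_le (abs_nonneg _) hw (abs_add_le u v)
    (add_inf_eq_zero (abs_nonneg u) (abs_nonneg v) hw hu hv)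

lemma abs_sub_le_abs_add_abs (u v : α) : |u - v| ≤ |u| + |v| := by
  simpa [sub_eq_add_neg] using abs_add_le u (-v)

lemma abs_sub_inf_eq_zero (hw : 0 ≤ w) (hu : |u| ⊓ w = 0) (hv : |v| ⊓ w = 0) :
    |u - v| ⊓ w = 0 :=
  inf_eq_zero_of_le (abs_nonneg _) hw (abs_sub_le_abs_add_abs u v)
    (add_inf_eq_zero (abs_nonneg u) (abs_nonneg v) hw hu hv)

lemma nonneg_of_nsmul_nonneg {n : ℕ} (hn : n ≠ 0) (h : 0 ≤ n • u) : 0 ≤ u := by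
  have hle : u⁻ ≤ n • u⁺ :=
    calc u⁻ ≤ n • u⁻ := le_self_nsmul (negPart_nonneg u) hn
      _ ≤ n • u⁺ := by rwa [← sub_nonneg, ← nsmul_sub, posPart_sub_negPart]
  have hdisj : (n • u⁺) ⊓ u⁻ = 0 :=
    nsmul_inf_eq_zero (posPart_nonneg u) (negPart_nonneg u) (posPart_inf_negPart_eq_zero u) n
  rw [← negPart_eq_zero, ← inf_eq_left.2 hle, inf_comm, hdisj]

lemma eq_zero_of_abs_eq_zero (h : |u| = 0) : u = 0 :=
  le_antisymm (h ▸ le_abs_self u) (neg_nonpos.1 (h ▸ neg_le_abs u))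

lemma eq_zero_of_abs_le_of_abs_inf_eq_zero (hle : |u| ≤ w) (h : |u| ⊓ w = 0) : u = 0 :=
  eq_zero_of_abs_eq_zero (by rwa [inf_eq_left.2 hle] at h)

lemma abs_add_eq_add_abs_of_abs_inf_abs_eq_zero (h : |u| ⊓ |v| = 0) :
    |u + v| = |u| + |v| := by
  refine le_antisymm (abs_add_le u v) ?_
  have hsup : |v| ⊔ |u| = |u| + |v| := by
    rw [← zero_add (|v| ⊔ |u|), ← h, inf_comm, inf_add_sup, add_comm]
  calc |u| + |v| = |v| ⊔ |u| - |v| ⊓ |u| := by rw [inf_comm, h, sub_zero, hsup]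
    _ = |(|u| - |v|)| := sup_sub_inf_eq_abs_sub _ _
    _ ≤ |u + v| := by simpa using abs_abs_sub_abs_le u (-v)

end LatticeOrderedGroup

section OrderedModule

variable {𝕜 α : Type*} [Field 𝕜] [LinearOrder 𝕜] [IsStrictOrderedRing 𝕜]
  [Lattice α] [AddCommGroup α] [Module 𝕜 α] [PosSMulMono 𝕜 α] {u w : α}

lemma abs_smul_le_smul_abs (s : 𝕜) (u : α) : |s • u| ≤ |s| • |u| := by
  have key : ∀ (t : 𝕜) (x : α), t • x ≤ |t| • |x| := by
    intro t x
    rcases le_total 0 t with ht | ht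
    · rw [abs_of_nonneg ht]
      exact smul_le_smul_of_nonneg_left (le_abs_self x) ht
    · rw [abs_of_nonpos ht, ← neg_smul_neg]
      exact smul_le_smul_of_nonneg_left (neg_le_abs x) (neg_nonneg.2 ht)
  refine abs_le'.2 ⟨key s u, ?_⟩
  simpa [← neg_smul, abs_neg] using key (-s) u

variable [IsOrderedAddMonoid α]

lemma abs_smul' (s : 𝕜) (u : α) : |s • u| = |s| • |u| := by
  refine le_antisymm (abs_smul_le_smul_abs s u) ?_
  rcases eq_or_ne s 0 with rfl | hs
  · simp
  calc |s| • |u| = |s| • |s⁻¹ • s • u| := by rw [inv_smul_smul₀ hs]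
    _ ≤ |s| • (|s⁻¹| • |s • u|) :=
        smul_le_smul_of_nonneg_left (abs_smul_le_smul_abs _ _) (abs_nonneg s)
    _ = |s • u| := by rw [smul_smul, abs_inv, mul_inv_cancel₀ (abs_ne_zero.2 hs), one_smul]

lemma inf_smul_eq_zero [Archimedean 𝕜] (hu : 0 ≤ u) (hw : 0 ≤ w) (h : u ⊓ w = 0) {s : 𝕜}
    (hs : 0 ≤ s) : u ⊓ s • w = 0 := by
  obtain ⟨n, hn⟩ := exists_nat_ge s
  have hle : s • w ≤ n • w := by
    rw [← Nat.cast_smul_eq_nsmul 𝕜]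
    exact smul_le_smul_of_nonneg_right hn hw
  rw [inf_comm] at h ⊢
  exact inf_eq_zero_of_le (smul_nonneg hs hw) hu hle (nsmul_inf_eq_zero hw hu h n)

lemma abs_smul_inf_eq_zero [Archimedean 𝕜] (hw : 0 ≤ w) (h : |u| ⊓ w = 0) (s : 𝕜) :
    |s • u| ⊓ w = 0 := by
  rw [abs_smul', inf_comm]
  exact inf_smul_eq_zero hw (abs_nonneg u) (by rwa [inf_comm]) (abs_nonneg s)

lemma eq_zero_of_abs_le_smul_of_abs_inf_eq_zero [Archimedean 𝕜] (hw : 0 ≤ w) {s : 𝕜}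
    (hle : |u| ≤ s • w) (h : |u| ⊓ w = 0) : u = 0 :=
  eq_zero_of_abs_le_of_abs_inf_eq_zero
    (hle.trans (smul_le_smul_of_nonneg_right (le_abs_self s) hw))
    (inf_smul_eq_zero (abs_nonneg u) hw h (abs_nonneg s))

end OrderedModule

section NormedLattice

variable {X : Type*} [NormedAddCommGroup X] [Lattice X] [HasSolidNorm X] [IsOrderedAddMonoid X]
  [NormedSpace ℝ X]

/-- Nonnegative rational multiples of a positive vector are positive by unperforation; the real
case follows since the positive cone is closed and `ℚ` is dense in `ℝ`. -/
instance HasSolidNorm.toPosSMulMono : PosSMulMono ℝ X := by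
  refine PosSMulMono.of_smul_nonneg fun s hs w hw => ?_
  have hrat : ∀ q : ℚ, 0 ≤ q → 0 ≤ (q : ℝ) • w := by
    intro q hq
    refine nonneg_of_nsmul_nonneg q.den_nz ?_
    have hnum : ((q.num.toNat : ℕ) : ℝ) = q.num := by
      exact_mod_cast Int.toNat_of_nonneg (Rat.num_nonneg.2 hq)
    rw [← Nat.cast_smul_eq_nsmul ℝ, smul_smul, Rat.cast_def, mul_div_cancel₀ _ (by simp), ← hnum,
      Nat.cast_smul_eq_nsmul]
    exact nsmul_nonneg hw _
  suffices 0 ≤ max s 0 • w by rwa [max_eq_left hs] at this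
  refine Rat.denseRange_cast.induction_on (p := fun s : ℝ => 0 ≤ max s 0 • w) s ?_ fun q => ?_
  · exact isClosed_nonneg.preimage ((continuous_id.max continuous_const).smul continuous_const)
  · simpa using hrat (max q 0) (le_max_right q 0)

end NormedLattice

section Atom

variable {X Y : Type*} [Lattice X] [AddCommGroup X] [Lattice Y] [AddCommGroup Y]

structure IsPositiveAtom [Module ℝ X] (a : X) : Prop where
  nonneg : 0 ≤ a
  ne_zero : a ≠ 0
  exists_eq_smul_of_le : ∀ v : X, 0 ≤ v → v ≤ a → ∃ t : ℝ, 0 ≤ t ∧ v = t • a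

def DisjointnessPreserving (T : X → Y) : Prop :=
  ∀ u v : X, |u| ⊓ |v| = 0 → |T u| ⊓ |T v| = 0

end Atom

namespace IsPositiveAtom

variable {X : Type*} [NormedAddCommGroup X] [Lattice X] [NormedSpace ℝ X] {a b c : X}

lemma inf_eq_zero_or_eq (ha : IsPositiveAtom a) (hc : IsPositiveAtom c) (hca : ‖c‖ = ‖a‖) :
    c ⊓ a = 0 ∨ c = a := by
  obtain ⟨s, hs, hsa⟩ := ha.exists_eq_smul_of_le _ (le_inf hc.nonneg ha.nonneg) inf_le_right
  obtain ⟨s', hs', hsc⟩ := hc.exists_eq_smul_of_le _ (le_inf hc.nonneg ha.nonneg) inf_le_left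
  rcases eq_or_ne s 0 with rfl | hs0
  · exact Or.inl (by rwa [zero_smul] at hsa)
  have hs'0 : s' ≠ 0 := by
    rintro rfl
    rw [zero_smul, hsa] at hsc
    exact hs0 ((smul_eq_zero.1 hsc).resolve_right ha.ne_zero)
  have hc_eq : c = (s / s') • a := by
    rw [div_eq_inv_mul, mul_smul, ← hsa, hsc, inv_smul_smul₀ hs'0]
  have hk : s / s' = 1 := by
    have h := congrArg norm hc_eq
    rw [norm_smul, hca, Real.norm_of_nonneg (div_nonneg hs hs')] at h
    exact (mul_eq_right₀ (norm_ne_zero_iff.2 ha.ne_zero)).1 h.symm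
  exact Or.inr (by rw [hc_eq, hk, one_smul])

variable [HasSolidNorm X] [IsOrderedAddMonoid X]

lemma exists_smul_le_inf_eq_zero (ha : IsPositiveAtom a) {z : X} (hz : 0 ≤ z) :
    ∃ t : ℝ, t • a ≤ z ∧ (z - t • a) ⊓ a = 0 := by
  set S := {s : ℝ | 0 ≤ s ∧ s • a ≤ z}
  have hbdd : BddAbove S := by
    refine ⟨‖z‖ / ‖a‖, fun s ⟨hs, hsz⟩ => ?_⟩
    rw [le_div_iff₀ (norm_pos_iff.2 ha.ne_zero)]
    have := norm_le_norm_of_abs_le_abs (a := s • a) (b := z) (by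
      rwa [abs_of_nonneg (smul_nonneg hs ha.nonneg), abs_of_nonneg hz])
    rwa [norm_smul, Real.norm_of_nonneg hs] at this
  have hclosed : IsClosed S :=
    isClosed_Ici.inter (isClosed_le (continuous_id.smul continuous_const) continuous_const)
  obtain ⟨ht, htz⟩ : sSup S ∈ S := hclosed.csSup_mem ⟨0, le_rfl, by rwa [zero_smul]⟩ hbdd
  refine ⟨sSup S, htz, ?_⟩
  obtain ⟨c, hc, hca⟩ :=
    ha.exists_eq_smul_of_le _ (le_inf (sub_nonneg.2 htz) ha.nonneg) inf_le_right
  rcases hc.eq_or_lt with rfl | hc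
  · rw [hca, zero_smul]
  have hmem : sSup S + c ∈ S := ⟨by positivity, by
    rw [add_smul, ← le_sub_iff_add_le', ← hca]; exact inf_le_left⟩
  linarith [le_csSup hbdd hmem]

lemma exists_abs_sub_smul_inf_eq_zero (ha : IsPositiveAtom a) (z : X) :
    ∃ t : ℝ, |z - t • a| ⊓ a = 0 := by
  obtain ⟨t₁, h₁, h₁'⟩ := ha.exists_smul_le_inf_eq_zero (posPart_nonneg z)
  obtain ⟨t₂, h₂, h₂'⟩ := ha.exists_smul_le_inf_eq_zero (negPart_nonneg z)
  refine ⟨t₁ - t₂, ?_⟩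
  have hz : z - (t₁ - t₂) • a = (z⁺ - t₁ • a) - (z⁻ - t₂ • a) := by
    conv_lhs => rw [← posPart_sub_negPart z]
    rw [sub_smul]; abel
  rw [hz]
  exact abs_sub_inf_eq_zero ha.nonneg (by rwa [abs_of_nonneg (sub_nonneg.2 h₁)])
    (by rwa [abs_of_nonneg (sub_nonneg.2 h₂)])

lemma eq_of_abs_sub_smul_inf_eq_zero (ha : IsPositiveAtom a) {z : X} {s t : ℝ}
    (hs : |z - s • a| ⊓ a = 0) (ht : |z - t • a| ⊓ a = 0) : s = t := by
  have hst : (t - s) • a = (z - s • a) - (z - t • a) := by rw [sub_smul]; abel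
  have h : (t - s) • a = 0 :=
    eq_zero_of_abs_le_smul_of_abs_inf_eq_zero ha.nonneg
      ((abs_smul' _ _).trans (by rw [abs_of_nonneg ha.nonneg])).le
      (hst ▸ abs_sub_inf_eq_zero ha.nonneg hs ht)
  linarith [sub_eq_zero.1 ((smul_eq_zero.1 h).resolve_right ha.ne_zero)]

noncomputable def coeff (ha : IsPositiveAtom a) (z : X) : ℝ :=
  (ha.exists_abs_sub_smul_inf_eq_zero z).choose

lemma abs_sub_coeff_smul_inf_eq_zero (ha : IsPositiveAtom a) (z : X) :
    |z - ha.coeff z • a| ⊓ a = 0 :=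
  (ha.exists_abs_sub_smul_inf_eq_zero z).choose_spec

lemma coeff_eq_iff (ha : IsPositiveAtom a) {z : X} {t : ℝ} :
    ha.coeff z = t ↔ |z - t • a| ⊓ a = 0 :=
  ⟨fun h => h ▸ ha.abs_sub_coeff_smul_inf_eq_zero z,
    ha.eq_of_abs_sub_smul_inf_eq_zero (ha.abs_sub_coeff_smul_inf_eq_zero z)⟩

lemma coeff_add (ha : IsPositiveAtom a) (y z : X) :
    ha.coeff (y + z) = ha.coeff y + ha.coeff z := by
  rw [coeff_eq_iff]
  have hyz : y + z - (ha.coeff y + ha.coeff z) • a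
      = (y - ha.coeff y • a) + (z - ha.coeff z • a) := by rw [add_smul]; abel
  rw [hyz]
  exact abs_add_inf_eq_zero ha.nonneg (ha.abs_sub_coeff_smul_inf_eq_zero y)
    (ha.abs_sub_coeff_smul_inf_eq_zero z)

lemma coeff_smul (ha : IsPositiveAtom a) (s : ℝ) (z : X) :
    ha.coeff (s • z) = s * ha.coeff z := by
  rw [coeff_eq_iff, mul_smul, ← smul_sub]
  exact abs_smul_inf_eq_zero ha.nonneg (ha.abs_sub_coeff_smul_inf_eq_zero z) s

lemma abs_coeff_mul_norm_le (ha : IsPositiveAtom a) (z : X) : |ha.coeff z| * ‖a‖ ≤ ‖z‖ := by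
  set r := z - ha.coeff z • a
  have hdisj : |ha.coeff z • a| ⊓ |r| = 0 := by
    rw [abs_smul', abs_of_nonneg ha.nonneg, inf_comm]
    exact inf_smul_eq_zero (abs_nonneg r) ha.nonneg (ha.abs_sub_coeff_smul_inf_eq_zero z)
      (abs_nonneg _)
  have hle : |ha.coeff z • a| ≤ |z| :=
    calc |ha.coeff z • a| ≤ |ha.coeff z • a| + |r| := le_add_of_nonneg_right (abs_nonneg r)
      _ = |z| := by rw [← abs_add_eq_add_abs_of_abs_inf_abs_eq_zero hdisj, add_sub_cancel]
  simpa [norm_smul] using norm_le_norm_of_abs_le_abs hle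

noncomputable def coeffL (ha : IsPositiveAtom a) : X →L[ℝ] ℝ :=
  LinearMap.mkContinuous
    { toFun := ha.coeff
      map_add' := ha.coeff_add
      map_smul' := ha.coeff_smul } ‖a‖⁻¹ fun z => by
    rw [Real.norm_eq_abs, inv_mul_eq_div, le_div_iff₀ (norm_pos_iff.2 ha.ne_zero)]
    exact ha.abs_coeff_mul_norm_le z

lemma coeff_self (ha : IsPositiveAtom a) : ha.coeff a = 1 :=
  ha.coeff_eq_iff.2 (by simp [inf_eq_left.2 ha.nonneg])

lemma coeff_eq_zero_of_abs_inf_eq_zero (ha : IsPositiveAtom a) {z : X} (h : |z| ⊓ a = 0) :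
    ha.coeff z = 0 :=
  ha.coeff_eq_iff.2 (by simpa using h)

lemma coeff_smul_self_of_abs_le_smul (ha : IsPositiveAtom a) {z : X} {s : ℝ} (h : |z| ≤ s • a) :
    ha.coeff z • a = z := by
  have hle : |z - ha.coeff z • a| ≤ (s + |ha.coeff z|) • a :=
    calc |z - ha.coeff z • a| ≤ |z| + |ha.coeff z • a| := abs_sub_le_abs_add_abs _ _
      _ = |z| + |ha.coeff z| • a := by rw [abs_smul', abs_of_nonneg ha.nonneg]
      _ ≤ (s + |ha.coeff z|) • a := by rw [add_smul]; exact add_le_add_left h _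
  exact (sub_eq_zero.1 (eq_zero_of_abs_le_smul_of_abs_inf_eq_zero ha.nonneg hle
    (ha.abs_sub_coeff_smul_inf_eq_zero z))).symm

lemma abs_map (hb : IsPositiveAtom b) {T : X ≃ₗ[ℝ] X} (hT : DisjointnessPreserving T) :
    IsPositiveAtom |T b| where
  nonneg := abs_nonneg _
  ne_zero h := hb.ne_zero (T.map_eq_zero_iff.1 (eq_zero_of_abs_eq_zero h))
  exists_eq_smul_of_le v hv hvle := by
    set t := hb.coeff (T.symm v)
    set r := T.symm v - t • b
    have hv_eq : v = t • T b + T r := by simp [r]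
    have hTr : |T r| ⊓ |T b| = 0 :=
      hT r b (by rw [abs_of_nonneg hb.nonneg]; exact hb.abs_sub_coeff_smul_inf_eq_zero _)
    have hle : |T r| ≤ (1 + |t|) • |T b| :=
      calc |T r| = |v - t • T b| := by rw [hv_eq, add_sub_cancel_left]
        _ ≤ |v| + |t| • |T b| := (abs_sub_le_abs_add_abs _ _).trans_eq (by rw [abs_smul'])
        _ ≤ (1 + |t|) • |T b| := by
          rw [add_smul, one_smul, abs_of_nonneg hv]; exact add_le_add_left hvle _
    have hr : T r = 0 := eq_zero_of_abs_le_smul_of_abs_inf_eq_zero (abs_nonneg _) hle hTr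
    refine ⟨|t|, abs_nonneg t, ?_⟩
    rw [← abs_of_nonneg hv, hv_eq, hr, add_zero, abs_smul']

noncomputable def coeffSeminorm (ha : IsPositiveAtom a) : Seminorm ℝ X :=
  (normSeminorm ℝ ℝ).comp ha.coeffL.toLinearMap

noncomputable def remSeminorm (ha : IsPositiveAtom a) : Seminorm ℝ X :=
  (normSeminorm ℝ X).comp (LinearMap.id - (ha.coeffL.smulRight a).toLinearMap)

lemma coeffSeminorm_apply (ha : IsPositiveAtom a) (w : X) :
    ha.coeffSeminorm w = |ha.coeff w| := rfl

lemma remSeminorm_apply (ha : IsPositiveAtom a) (w : X) :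
    ha.remSeminorm w = ‖w - ha.coeff w • a‖ := rfl

lemma continuous_coeffSeminorm (ha : IsPositiveAtom a) : Continuous ha.coeffSeminorm :=
  continuous_norm.comp ha.coeffL.continuous

lemma continuous_remSeminorm (ha : IsPositiveAtom a) : Continuous ha.remSeminorm :=
  continuous_norm.comp (continuous_id.sub (ha.coeffL.smulRight a).continuous)

end IsPositiveAtom

def IsConvexTransitive (X : Type*) [NormedAddCommGroup X] [NormedSpace ℝ X] : Prop :=
  ∀ x : X, ‖x‖ = 1 →
    closure (convexHull ℝ {y : X | ∃ T : X ≃ₗᵢ[ℝ] X, y = T x}) = Metric.closedBall (0 : X) 1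

namespace IsConvexTransitive

variable {X : Type*} [NormedAddCommGroup X] [NormedSpace ℝ X]

lemma le_of_norm_le_one (hX : IsConvexTransitive X) {f : X → ℝ} (hf : ConvexOn ℝ Set.univ f)
    (hfc : Continuous f) {z : X} (hz : ‖z‖ = 1) {M : ℝ} (hM : ∀ T : X ≃ₗᵢ[ℝ] X, f (T z) ≤ M)
    {w : X} (hw : ‖w‖ ≤ 1) : f w ≤ M := by
  have hsub : {y : X | ∃ T : X ≃ₗᵢ[ℝ] X, y = T z} ⊆ {w | f w ≤ M} := by
    rintro _ ⟨T, rfl⟩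
    exact hM T
  have hw' : w ∈ closure (convexHull ℝ {y : X | ∃ T : X ≃ₗᵢ[ℝ] X, y = T z}) := by
    rw [hX z hz]
    simpa using hw
  exact closure_minimal (convexHull_min hsub (by simpa using hf.convex_le M))
    (isClosed_le hfc continuous_const) hw'

lemma seminorm_mul_norm_le (hX : IsConvexTransitive X) (p : Seminorm ℝ X) (hp : Continuous p)
    {z : X} {M : ℝ} (hM : ∀ T : X ≃ₗᵢ[ℝ] X, p (T z) ≤ M) (w : X) : p w * ‖z‖ ≤ M * ‖w‖ := by
  have hM0 : 0 ≤ M := (apply_nonneg p _).trans (hM (LinearIsometryEquiv.refl ℝ X))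
  rcases eq_or_ne z 0 with rfl | hz
  · simpa using mul_nonneg hM0 (norm_nonneg w)
  rcases eq_or_ne w 0 with rfl | hw
  · simp
  have hunit : ∀ {u : X}, 0 < ‖u‖ → ‖‖u‖⁻¹ • u‖ = 1 := fun hu => by
    rw [norm_smul, norm_inv, norm_norm, inv_mul_cancel₀ hu.ne']
  have hz' := norm_pos_iff.2 hz
  have hw' := norm_pos_iff.2 hw
  have key := hX.le_of_norm_le_one p.convexOn hp (hunit hz') (M := ‖z‖⁻¹ * M)
    (fun T => by
      rw [map_smul, map_smul_eq_mul, norm_inv, norm_norm]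
      exact mul_le_mul_of_nonneg_left (hM T) (inv_nonneg.2 hz'.le))
    (hunit hw').le
  rw [map_smul_eq_mul, norm_inv, norm_norm, inv_mul_le_iff₀ hw'] at key
  calc p w * ‖z‖ ≤ ‖w‖ * (‖z‖⁻¹ * M) * ‖z‖ := mul_le_mul_of_nonneg_right key hz'.le
    _ = M * ‖w‖ := by field_simp

end IsConvexTransitive

namespace IsPositiveAtom

variable {X : Type*} [NormedAddCommGroup X] [Lattice X] [HasSolidNorm X] [IsOrderedAddMonoid X]
  [NormedSpace ℝ X] {a c : X}

lemma abs_coeff_le_norm (ha : IsPositiveAtom a) (hna : ‖a‖ = 1) (z : X) : |ha.coeff z| ≤ ‖z‖ := by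
  simpa [hna] using ha.abs_coeff_mul_norm_le z

lemma abs_apply_inf_eq_zero_or_eq (hdisj : ∀ T : X ≃ₗᵢ[ℝ] X, DisjointnessPreserving T)
    (ha : IsPositiveAtom a) (T : X ≃ₗᵢ[ℝ] X) : |T a| ⊓ a = 0 ∨ |T a| = a :=
  ha.inf_eq_zero_or_eq (ha.abs_map (T := T.toLinearEquiv) (hdisj T)) (by simp [norm_abs_eq_norm])

lemma one_add_norm_le_norm_add (hX : IsConvexTransitive X)
    (hdisj : ∀ T : X ≃ₗᵢ[ℝ] X, DisjointnessPreserving T) (ha : IsPositiveAtom a) (hna : ‖a‖ = 1)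
    (hc : |c| ⊓ a = 0) : 1 + ‖c‖ ≤ ‖a + c‖ := by
  set p := ha.coeffSeminorm + ha.remSeminorm
  have hp : ∀ w, p w = |ha.coeff w| + ‖w - ha.coeff w • a‖ := fun w => by
    rw [add_apply, coeffSeminorm_apply, remSeminorm_apply]
  have horbit : ∀ T : X ≃ₗᵢ[ℝ] X, p (T a) ≤ 1 := by
    intro T
    rw [hp]
    rcases ha.abs_apply_inf_eq_zero_or_eq hdisj T with h | h
    · simp [ha.coeff_eq_zero_of_abs_inf_eq_zero h, hna]
    · have hTa : ha.coeff (T a) • a = T a :=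
        ha.coeff_smul_self_of_abs_le_smul (s := 1) (by rw [h, one_smul])
      have hnorm : |ha.coeff (T a)| = 1 := by simpa [norm_smul, hna] using congrArg norm hTa
      rw [hTa, sub_self, norm_zero, add_zero, hnorm]
  have hac := hX.seminorm_mul_norm_le p
    (ha.continuous_coeffSeminorm.add ha.continuous_remSeminorm) horbit (a + c)
  rwa [hp, ha.coeff_add, ha.coeff_self, ha.coeff_eq_zero_of_abs_inf_eq_zero hc, add_zero, abs_one,
    one_smul, add_sub_cancel_left, hna, mul_one, one_mul] at hac

lemma norm_add_le_max_one_norm (hX : IsConvexTransitive X)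
    (hdisj : ∀ T : X ≃ₗᵢ[ℝ] X, DisjointnessPreserving T) (ha : IsPositiveAtom a) (hna : ‖a‖ = 1)
    (hc : |c| ⊓ a = 0) : ‖a + c‖ ≤ max 1 ‖c‖ := by
  have horbit : ∀ T : X ≃ₗᵢ[ℝ] X, ha.coeffSeminorm (T (a + c)) ≤ max 1 ‖c‖ := by
    intro T
    have hTac : |T a| ⊓ |T c| = 0 := hdisj T a c (by rwa [abs_of_nonneg ha.nonneg, inf_comm])
    rw [coeffSeminorm_apply, map_add, ha.coeff_add]
    rcases ha.abs_apply_inf_eq_zero_or_eq hdisj T with h | h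
    · rw [ha.coeff_eq_zero_of_abs_inf_eq_zero h, zero_add]
      exact (ha.abs_coeff_le_norm hna _).trans (by rw [T.norm_map]; exact le_max_right _ _)
    · rw [ha.coeff_eq_zero_of_abs_inf_eq_zero (z := T c) (by rwa [← h, inf_comm]), add_zero]
      exact (ha.abs_coeff_le_norm hna _).trans (by rw [T.norm_map, hna]; exact le_max_left _ _)
  simpa [coeffSeminorm_apply, ha.coeff_self, hna] using
    hX.seminorm_mul_norm_le _ ha.continuous_coeffSeminorm horbit a

lemma eq_zero_of_abs_inf_eq_zero (hX : IsConvexTransitive X)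
    (hdisj : ∀ T : X ≃ₗᵢ[ℝ] X, DisjointnessPreserving T) (ha : IsPositiveAtom a) (hna : ‖a‖ = 1)
    (hc : |c| ⊓ a = 0) : c = 0 := by
  have h := (one_add_norm_le_norm_add hX hdisj ha hna hc).trans
    (norm_add_le_max_one_norm hX hdisj ha hna hc)
  have : ‖c‖ ≤ 0 := by rcases le_max_iff.1 h with h | h <;> linarith [norm_nonneg c]
  exact norm_le_zero_iff.1 this

end IsPositiveAtom

theorem stmt19_general {X : Type*} [NormedAddCommGroup X] [Lattice X] [HasSolidNorm X]
    [IsOrderedAddMonoid X] [NormedSpace ℝ X]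
    (hct : ∀ x : X, ‖x‖ = 1 →
      closure (convexHull ℝ {y : X | ∃ T : X ≃ₗᵢ[ℝ] X, y = T x}) =
        Metric.closedBall (0 : X) 1)
    (hdisj : ∀ T : X ≃ₗᵢ[ℝ] X, ∀ a b : X, |a| ⊓ |b| = 0 → |T a| ⊓ |T b| = 0)
    (x : X) (hx : ‖x‖ = 1)
    (hatom : ∀ v : X, 0 ≤ v → v ≤ |x| → ∃ t : ℝ, 0 ≤ t ∧ v = t • |x|) :
    Module.rank ℝ X = 1 := by
  have hna : ‖|x|‖ = 1 := by rw [norm_abs_eq_norm, hx]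
  have ha : IsPositiveAtom |x| :=
    ⟨abs_nonneg x, fun h => by simp [h] at hna, hatom⟩
  refine rank_eq_one |x| ha.ne_zero fun w => ⟨ha.coeff w, ?_⟩
  exact (sub_eq_zero.1 (ha.eq_zero_of_abs_inf_eq_zero hct hdisj hna
    (ha.abs_sub_coeff_smul_inf_eq_zero w))).symm

/-- Theorem 4.2 (with σ-completeness, cf. Section 4): a σ-complete convex-transitive Banach
lattice whose surjective linear isometries are all disjointness-preserving and which contains
an atom on the unit sphere is one-dimensional. -/
theorem stmt19 {X : Type*} [NormedAddCommGroup X] [Lattice X] [HasSolidNorm X]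
    [IsOrderedAddMonoid X] [NormedSpace ℝ X]
    [CompleteSpace X]
    (hsigma : ∀ s : Set X, s.Countable → s.Nonempty → BddAbove s → ∃ a : X, IsLUB s a)
    (hct : ∀ x : X, ‖x‖ = 1 →
      closure (convexHull ℝ {y : X | ∃ T : X ≃ₗᵢ[ℝ] X, y = T x}) =
        Metric.closedBall (0 : X) 1)
    (hdisj : ∀ T : X ≃ₗᵢ[ℝ] X, ∀ a b : X, |a| ⊓ |b| = 0 → |T a| ⊓ |T b| = 0)
    (x : X) (hx : ‖x‖ = 1)
    (hatom : ∀ v : X, 0 ≤ v → v ≤ |x| → ∃ t : ℝ, 0 ≤ t ∧ v = t • |x|) :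
    Module.rank ℝ X = 1 :=
  stmt19_general hct hdisj x hx hatom
end
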